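/- arXiv:1403.3201 — 6 statements merged into one kernel-verified Lean document; each statement's English description precedes it below -/
import Mathlib

section
/- Let g : [a,b] → ℝ be a non-negative continuous function that is not identically zero on any open subinterval of [a,b], and let h : [a,b] → ℝ be continuous and strictly positive. Then for every positive integer n there exists a partition a = t₀ < t₁ < ⋯ < tₙ = b such that the quantities (tᵢ - tᵢ₋₁) · (max of g on [tᵢ₋₁, tᵢ]) · (max of h on [tᵢ₋₁, tᵢ]) are equal for all i = 1, …, n. -/
/-!
Call `F x y = (y - x) · max_[x,y] g · max_[x,y] h` the cost of `[x, y]`: it is continuous, vanishes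
on degenerate intervals and strictly increases when the interval strictly grows. For any such cost,
choose among the weakly increasing partitions (a compact set) one maximizing the least cost `m` of a
piece. If some piece cost more than `m`, there would be two adjacent pieces, one of cost `m` and one
dearer; moving their common endpoint slightly into the dearer one makes both cost more than `m`.
Repeating this lifts every piece above `m`, contradicting maximality.
-/

open Set

theorem ContinuousOn.continuousOn_sSup_image_Icc {α : Type*} [ConditionallyCompleteLinearOrder α]
    [TopologicalSpace α] [OrderTopology α] {g : ℝ → α} {a b : ℝ}
    (hg : ContinuousOn g (Icc a b)) :
    ContinuousOn (fun p : ℝ × ℝ => sSup (g '' Icc p.1 p.2))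
      {p | a ≤ p.1 ∧ p.1 ≤ p.2 ∧ p.2 ≤ b} := by
  rintro p ⟨hap, hp, hpb⟩
  set G := IccExtend (hap.trans (hp.trans hpb)) ((Icc a b).domRestrict g) with hGdef
  have hG : Continuous G := hg.domRestrict.Icc_extend'
  -- parametrizing `[x, y]` by `[0, 1]` turns this into `IsCompact.continuous_sSup`
  have hcont : Continuous fun q : ℝ × ℝ =>
      sSup ((fun s => G (AffineMap.lineMap q.1 q.2 s)) '' Icc (0 : ℝ) 1) :=
    isCompact_Icc.continuous_sSup (by fun_prop)
  have heq : ∀ q ∈ {p : ℝ × ℝ | a ≤ p.1 ∧ p.1 ≤ p.2 ∧ p.2 ≤ b},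
      sSup (g '' Icc q.1 q.2) =
        sSup ((fun s => G (AffineMap.lineMap q.1 q.2 s)) '' Icc (0 : ℝ) 1) := by
    rintro q ⟨haq, hq, hqb⟩
    rw [← image_image G, ← segment_eq_image_lineMap, segment_eq_Icc hq]
    refine congrArg sSup (image_congr fun s hs => ?_)
    rw [hGdef, IccExtend_of_mem _ _ ⟨haq.trans hs.1, hs.2.trans hqb⟩, domRestrict_apply]
  exact hcont.continuousWithinAt.congr heq (heq p ⟨hap, hp, hpb⟩)

structure IsMonotoneIntervalCost (a b : ℝ) (F : ℝ → ℝ → ℝ) : Prop where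
  continuousOn : ContinuousOn (Function.uncurry F) {p | a ≤ p.1 ∧ p.1 ≤ p.2 ∧ p.2 ≤ b}
  self_eq_zero : ∀ x ∈ Icc a b, F x x = 0
  strictMonoOn_right : ∀ x ∈ Icc a b, StrictMonoOn (F x) (Icc x b)
  strictAntiOn_left : ∀ y ∈ Icc a b, StrictAntiOn (F · y) (Icc a y)

/-- Asking `t i ∈ Icc a b` for every `i`, not only for `i ≤ n`, makes this set compact. -/
def monotonePartitions (a b : ℝ) (n : ℕ) : Set (ℕ → ℝ) :=
  {t | (∀ i, t i ∈ Icc a b) ∧ t 0 = a ∧ t n = b ∧ ∀ i < n, t i ≤ t (i + 1)}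

theorem isCompact_monotonePartitions (a b : ℝ) (n : ℕ) :
    IsCompact (monotonePartitions a b n) := by
  refine (isCompact_univ_pi fun _ => isCompact_Icc).of_isClosed_subset ?_
    fun t ht i _ => ht.1 i
  simp only [monotonePartitions, ofPred_and, ofPred_forall]
  refine (isClosed_iInter fun i => isClosed_Icc.preimage (continuous_apply i)).inter
    ((isClosed_eq (continuous_apply 0) continuous_const).inter
    ((isClosed_eq (continuous_apply n) continuous_const).inter
    (isClosed_iInter fun i => isClosed_iInter fun _ =>
      isClosed_le (continuous_apply i) (continuous_apply (i + 1)))))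

theorem update_mem_monotonePartitions {a b : ℝ} {n k : ℕ} {t : ℕ → ℝ}
    (ht : t ∈ monotonePartitions a b n) (hk : k + 1 < n) {s : ℝ}
    (hs : s ∈ Icc (t k) (t (k + 2))) :
    Function.update t (k + 1) s ∈ monotonePartitions a b n := by
  obtain ⟨hmem, h0, hn, hmono⟩ := ht
  refine ⟨fun i => ?_, ?_, ?_, fun i hi => ?_⟩
  · rcases eq_or_ne i (k + 1) with rfl | hik
    · simpa using ⟨(hmem k).1.trans hs.1, hs.2.trans (hmem (k + 2)).2⟩
    · simpa [hik] using hmem i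
  · simpa using h0
  · simpa [hk.ne'] using hn
  · rcases eq_or_ne i (k + 1) with rfl | hik
    · simpa using hs.2
    rcases eq_or_ne i k with rfl | hik'
    · simpa using hs.1
    · simpa [hik, hik'] using hmono i hi

theorem exists_adjacent_not_iff {P : ℕ → Prop} {n i j : ℕ} (hi : i < n) (hj : j < n)
    (hij : ¬(P i ↔ P j)) : ∃ k, k + 1 < n ∧ ¬(P k ↔ P (k + 1)) := by
  by_contra! hconst
  have h : ∀ k < n, (P k ↔ P 0) := by
    intro k hk
    induction k with
    | zero => rfl
    | succ k ih => exact (hconst k hk).symm.trans (ih (by omega))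
  exact hij ((h i hi).trans (h j hj).symm)

namespace IsMonotoneIntervalCost

variable {a b : ℝ} {F : ℝ → ℝ → ℝ}

theorem nonneg (hF : IsMonotoneIntervalCost a b F) {x y : ℝ} (hx : a ≤ x) (hxy : x ≤ y)
    (hy : y ≤ b) : 0 ≤ F x y := by
  have hxb : x ∈ Icc a b := ⟨hx, hxy.trans hy⟩
  rw [← hF.self_eq_zero x hxb]
  exact (hF.strictMonoOn_right x hxb).monotoneOn ⟨le_rfl, hxb.2⟩ ⟨hxy, hy⟩ hxy

theorem pos (hF : IsMonotoneIntervalCost a b F) {x y : ℝ} (hx : a ≤ x) (hxy : x < y)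
    (hy : y ≤ b) : 0 < F x y := by
  have hxb : x ∈ Icc a b := ⟨hx, hxy.le.trans hy⟩
  rw [← hF.self_eq_zero x hxb]
  exact hF.strictMonoOn_right x hxb ⟨le_rfl, hxb.2⟩ ⟨hxy.le, hy⟩ hxy

theorem exists_mem_Icc_lt_and_lt (hF : IsMonotoneIntervalCost a b F) {m x y z : ℝ}
    (hm : 0 ≤ m) (hx : a ≤ x) (hxy : x ≤ y) (hyz : y ≤ z) (hz : z ≤ b)
    (hmxy : m ≤ F x y) (hmyz : m ≤ F y z) (hlt : m < F x y ∨ m < F y z) :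
    ∃ s ∈ Icc x z, m < F x s ∧ m < F s z := by
  rcases hlt with hlt | hlt
  · have hxy' : x < y := hxy.lt_of_ne fun h => by
      rw [h, hF.self_eq_zero y ⟨hx.trans hxy, hyz.trans hz⟩] at hlt; linarith
    have hcont : ContinuousWithinAt (F x) (Icc x b) y :=
      hF.continuousOn.comp (continuousOn_const.prodMk continuousOn_id)
        (fun s hs => ⟨hx, hs.1, hs.2⟩) y ⟨hxy, hyz.trans hz⟩
    have := right_nhdsWithin_Ico_neBot hxy'
    have hsub : Ico x y ⊆ Icc x b := Ico_subset_Icc_self.trans (Icc_subset_Icc_right (hyz.trans hz))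
    obtain ⟨s, hs, hsIco⟩ :=
      (((hcont.mono hsub).eventually (lt_mem_nhds hlt)).and self_mem_nhdsWithin).exists
    refine ⟨s, ⟨hsIco.1, hsIco.2.le.trans hyz⟩, hs, hmyz.trans_lt ?_⟩
    exact hF.strictAntiOn_left z ⟨hx.trans (hxy.trans hyz), hz⟩
      ⟨hx.trans hsIco.1, hsIco.2.le.trans hyz⟩ ⟨hx.trans hxy, hyz⟩ hsIco.2
  · have hyz' : y < z := hyz.lt_of_ne fun h => by
      rw [h, hF.self_eq_zero z ⟨hx.trans (hxy.trans hyz), hz⟩] at hlt; linarith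
    have hcont : ContinuousWithinAt (F · z) (Icc a z) y :=
      hF.continuousOn.comp (continuousOn_id.prodMk continuousOn_const)
        (fun s hs => ⟨hs.1, hs.2, hz⟩) y ⟨hx.trans hxy, hyz⟩
    have := left_nhdsWithin_Ioc_neBot hyz'
    have hsub : Ioc y z ⊆ Icc a z := Ioc_subset_Icc_self.trans (Icc_subset_Icc_left (hx.trans hxy))
    obtain ⟨s, hs, hsIoc⟩ :=
      (((hcont.mono hsub).eventually (lt_mem_nhds hlt)).and self_mem_nhdsWithin).exists
    refine ⟨s, ⟨hxy.trans hsIoc.1.le, hsIoc.2⟩, hmxy.trans_lt ?_, hs⟩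
    exact hF.strictMonoOn_right x ⟨hx, hxy.trans (hyz.trans hz)⟩
      ⟨hxy, hyz.trans hz⟩ ⟨hxy.trans hsIoc.1.le, hsIoc.2.trans hz⟩ hsIoc.1

theorem exists_update_card_lt (hF : IsMonotoneIntervalCost a b F) {m : ℝ} (hm : 0 ≤ m)
    {n k : ℕ} {t : ℕ → ℝ} (ht : t ∈ monotonePartitions a b n)
    (hle : ∀ i < n, m ≤ F (t i) (t (i + 1))) (hk : k + 1 < n)
    (hadj : ¬(F (t k) (t (k + 1)) = m ↔ F (t (k + 1)) (t (k + 2)) = m)) :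
    ∃ t' ∈ monotonePartitions a b n, (∀ i < n, m ≤ F (t' i) (t' (i + 1))) ∧
      m < F (t' k) (t' (k + 1)) ∧
      {i ∈ Finset.range n | F (t' i) (t' (i + 1)) = m}.card <
        {i ∈ Finset.range n | F (t i) (t (i + 1)) = m}.card := by
  have hk' : k < n := by omega
  have hkeq : F (t k) (t (k + 1)) = m ∨ F (t (k + 1)) (t (k + 2)) = m := by tauto
  obtain ⟨s, hs, hks, hsk⟩ := hF.exists_mem_Icc_lt_and_lt hm (ht.1 k).1 (ht.2.2.2 k hk')
    (ht.2.2.2 (k + 1) hk) (ht.1 (k + 2)).2 (hle k hk') (hle (k + 1) hk) (by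
      rcases hkeq with h | h
      · exact .inr ((hle (k + 1) hk).lt_of_ne fun h' => hadj (by simp [h, ← h']))
      · exact .inl ((hle k hk').lt_of_ne fun h' => hadj (by simp [h, ← h'])))
  set t' := Function.update t (k + 1) s
  have hk_new : F (t' k) (t' (k + 1)) = F (t k) s := by simp [t']
  have hk1_new : F (t' (k + 1)) (t' (k + 2)) = F s (t (k + 2)) := by simp [t']
  have hother : ∀ i, i ≠ k → i ≠ k + 1 → F (t' i) (t' (i + 1)) = F (t i) (t (i + 1)) := by
    intro i hik hik1
    simp only [t', Function.update_of_ne hik1,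
      Function.update_of_ne (show i + 1 ≠ k + 1 by omega)]
  refine ⟨t', update_mem_monotonePartitions ht hk hs, fun i hi => ?_, hk_new ▸ hks,
    Finset.card_lt_card ((Finset.ssubset_iff_of_subset fun i hi => ?_).2 ?_)⟩
  · rcases eq_or_ne i k with rfl | hik
    · exact hk_new ▸ hks.le
    rcases eq_or_ne i (k + 1) with rfl | hik1
    · exact hk1_new ▸ hsk.le
    · exact hother i hik hik1 ▸ hle i hi
  · rw [Finset.mem_filter] at hi ⊢
    refine ⟨hi.1, ?_⟩
    rcases eq_or_ne i k with rfl | hik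
    · exact absurd hi.2 (hk_new ▸ hks.ne')
    rcases eq_or_ne i (k + 1) with rfl | hik1
    · exact absurd hi.2 (hk1_new ▸ hsk.ne')
    · exact hother i hik hik1 ▸ hi.2
  · rcases hkeq with h | h
    · exact ⟨k, by simp [hk', h], by simp [hk_new, hks.ne']⟩
    · exact ⟨k + 1, by simp [hk, h], by simp [hk1_new, hsk.ne']⟩

theorem exists_forall_lt_of_forall_le (hF : IsMonotoneIntervalCost a b F) {m : ℝ} (hm : 0 ≤ m)
    {n : ℕ} {t : ℕ → ℝ} (ht : t ∈ monotonePartitions a b n)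
    (hle : ∀ i < n, m ≤ F (t i) (t (i + 1))) (hlt : ∃ j < n, m < F (t j) (t (j + 1))) :
    ∃ t' ∈ monotonePartitions a b n, ∀ i < n, m < F (t' i) (t' (i + 1)) := by
  induction hcard : {i ∈ Finset.range n | F (t i) (t (i + 1)) = m}.card
      using Nat.strong_induction_on generalizing t with
  | _ c ih =>
    by_cases hall : ∀ i < n, m < F (t i) (t (i + 1))
    · exact ⟨t, ht, hall⟩
    push Not at hall
    obtain ⟨i, hi, hti⟩ := hall
    obtain ⟨j, hj, htj⟩ := hlt
    obtain ⟨k, hk, hadj⟩ := exists_adjacent_not_iff (P := fun i => F (t i) (t (i + 1)) = m)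
      hi hj (by simp [le_antisymm hti (hle i hi), htj.ne'])
    obtain ⟨t', ht', hle', hlt', hcard'⟩ := hF.exists_update_card_lt hm ht hle hk hadj
    exact ih _ (hcard ▸ hcard') ht' hle' ⟨k, by omega, hlt'⟩ rfl

theorem exists_equalizing_partition (hF : IsMonotoneIntervalCost a b F) (hab : a < b) {n : ℕ}
    (hn : 0 < n) :
    ∃ t : ℕ → ℝ, t 0 = a ∧ t n = b ∧ (∀ i < n, t i < t (i + 1)) ∧
      ∃ J : ℝ, ∀ i < n, F (t i) (t (i + 1)) = J := by
  have hne : (Finset.range n).Nonempty := Finset.nonempty_range_iff.2 hn.ne'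
  set Φ : (ℕ → ℝ) → ℝ := fun t => (Finset.range n).inf' hne fun i => F (t i) (t (i + 1))
  have hnonempty : (monotonePartitions a b n).Nonempty := by
    refine ⟨fun i => if i = 0 then a else b, fun i => ?_, rfl, if_neg hn.ne', fun i _ => ?_⟩
    all_goals dsimp only; split_ifs <;> simp_all [hab.le]
  have hΦ : ContinuousOn Φ (monotonePartitions a b n) :=
    .finset_inf'_apply hne fun i hi => hF.continuousOn.comp
      (by fun_prop : Continuous fun t : ℕ → ℝ => (t i, t (i + 1))).continuousOn
      fun t ht => ⟨(ht.1 i).1, ht.2.2.2 i (Finset.mem_range.1 hi), (ht.1 (i + 1)).2⟩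
  obtain ⟨t, ht, hmax⟩ := (isCompact_monotonePartitions a b n).exists_isMaxOn hnonempty hΦ
  have hge : ∀ i < n, Φ t ≤ F (t i) (t (i + 1)) :=
    fun i hi => Finset.inf'_le _ (Finset.mem_range.2 hi)
  have hm : 0 ≤ Φ t := (Finset.le_inf'_iff hne _).2 fun i hi =>
    hF.nonneg (ht.1 i).1 (ht.2.2.2 i (Finset.mem_range.1 hi)) (ht.1 (i + 1)).2
  have heq : ∀ i < n, F (t i) (t (i + 1)) = Φ t := by
    by_contra! ⟨j, hj, hj_ne⟩
    obtain ⟨t', ht', hlt'⟩ := hF.exists_forall_lt_of_forall_le hm ht hge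
      ⟨j, hj, (hge j hj).lt_of_ne hj_ne.symm⟩
    exact (hmax ht').not_gt
      ((Finset.lt_inf'_iff hne).2 fun i hi => hlt' i (Finset.mem_range.1 hi))
  have hpos : 0 < Φ t := by
    obtain ⟨i, hi, hlt⟩ : ∃ i ∈ Finset.range n, (0 : ℝ) < t (i + 1) - t i :=
      Finset.exists_lt_of_sum_lt (by
        rw [Finset.sum_range_sub, ht.2.1, ht.2.2.1, Finset.sum_const_zero, sub_pos]; exact hab)
    rw [← heq i (Finset.mem_range.1 hi)]
    exact hF.pos (ht.1 i).1 (sub_pos.1 hlt) (ht.1 (i + 1)).2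
  refine ⟨t, ht.2.1, ht.2.2.1, fun i hi => (ht.2.2.2 i hi).lt_of_ne fun h => ?_, Φ t, heq⟩
  have := heq i hi
  rw [← h, hF.self_eq_zero _ (ht.1 i)] at this
  exact hpos.ne this

end IsMonotoneIntervalCost

section SupCost

variable {a b : ℝ} {g h : ℝ → ℝ}

theorem mul_sSup_image_Icc_lt (hg : ContinuousOn g (Icc a b)) (hg0 : ∀ t ∈ Icc a b, 0 ≤ g t)
    (hgnz : ∀ p q : ℝ, a ≤ p → p < q → q ≤ b → ∃ t ∈ Ioo p q, g t ≠ 0)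
    (hh : ContinuousOn h (Icc a b)) (hhpos : ∀ t ∈ Icc a b, 0 < h t)
    {x y x' y' : ℝ} (ha : a ≤ x') (hx : x' ≤ x) (hxy : x ≤ y) (hy : y ≤ y') (hb : y' ≤ b)
    (hlen : y - x < y' - x') :
    (y - x) * sSup (g '' Icc x y) * sSup (h '' Icc x y) <
      (y' - x') * sSup (g '' Icc x' y') * sSup (h '' Icc x' y') := by
  have hsub : Icc x y ⊆ Icc x' y' := Icc_subset_Icc hx hy
  have hsub' : Icc x' y' ⊆ Icc a b := Icc_subset_Icc ha hb
  have hg' := hg.mono hsub'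
  have hh' := hh.mono hsub'
  have hxy_mem : x ∈ Icc x y := left_mem_Icc.2 hxy
  have hgle : sSup (g '' Icc x y) ≤ sSup (g '' Icc x' y') :=
    csSup_le_csSup (isCompact_Icc.bddAbove_image hg') ((nonempty_Icc.2 hxy).image g)
      (image_mono hsub)
  have hhle : sSup (h '' Icc x y) ≤ sSup (h '' Icc x' y') :=
    csSup_le_csSup (isCompact_Icc.bddAbove_image hh') ((nonempty_Icc.2 hxy).image h)
      (image_mono hsub)
  have hg_nonneg : 0 ≤ sSup (g '' Icc x y) :=
    (hg0 x (hsub' (hsub hxy_mem))).trans ((hg'.mono hsub).le_sSup_image_Icc hxy_mem)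
  have hh_nonneg : 0 ≤ sSup (h '' Icc x y) :=
    (hhpos x (hsub' (hsub hxy_mem))).le.trans ((hh'.mono hsub).le_sSup_image_Icc hxy_mem)
  obtain ⟨s, hs, hgs⟩ := hgnz x' y' ha (by linarith) hb
  have hg_pos : 0 < sSup (g '' Icc x' y') :=
    ((hg0 s (hsub' (Ioo_subset_Icc_self hs))).lt_of_ne hgs.symm).trans_le
      (hg'.le_sSup_image_Icc (Ioo_subset_Icc_self hs))
  have hh_pos : 0 < sSup (h '' Icc x' y') :=
    (hhpos x (hsub' (hsub hxy_mem))).trans_le (hh'.le_sSup_image_Icc (hsub hxy_mem))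
  calc (y - x) * sSup (g '' Icc x y) * sSup (h '' Icc x y)
      ≤ (y - x) * sSup (g '' Icc x' y') * sSup (h '' Icc x' y') := by
        have : 0 ≤ y - x := sub_nonneg.2 hxy
        gcongr
    _ < (y' - x') * sSup (g '' Icc x' y') * sSup (h '' Icc x' y') := by gcongr

theorem isMonotoneIntervalCost_mul_sSup (hg : ContinuousOn g (Icc a b))
    (hg0 : ∀ t ∈ Icc a b, 0 ≤ g t)
    (hgnz : ∀ p q : ℝ, a ≤ p → p < q → q ≤ b → ∃ t ∈ Ioo p q, g t ≠ 0)
    (hh : ContinuousOn h (Icc a b)) (hhpos : ∀ t ∈ Icc a b, 0 < h t) :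
    IsMonotoneIntervalCost a b
      fun x y => (y - x) * sSup (g '' Icc x y) * sSup (h '' Icc x y) where
  continuousOn := ((continuous_snd.sub continuous_fst).continuousOn.mul
    hg.continuousOn_sSup_image_Icc).mul hh.continuousOn_sSup_image_Icc
  self_eq_zero x _ := by simp
  strictMonoOn_right x hx y hy y' hy' hyy' :=
    mul_sSup_image_Icc_lt hg hg0 hgnz hh hhpos hx.1 le_rfl hy.1 hyy'.le hy'.2 (by linarith)
  strictAntiOn_left y hy x hx x' hx' hxx' :=
    mul_sSup_image_Icc_lt hg hg0 hgnz hh hhpos hx.1 hxx'.le hx'.2 le_rfl hy.2 (by linarith)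

end SupCost

/-- For non-negative continuous `g` not identically zero on any open subinterval and
strictly positive continuous `h`, for every positive `n` there is a partition
`a = t₀ < t₁ < ⋯ < tₙ = b` equalizing the quantities
`(tᵢ₊₁ - tᵢ) · max g · max h` over the subintervals. -/
theorem equalizing_partition_exists
    (a b : ℝ) (hab : a < b) (g h : ℝ → ℝ)
    (hg : ContinuousOn g (Set.Icc a b))
    (hg0 : ∀ t ∈ Set.Icc a b, 0 ≤ g t)
    (hgnz : ∀ p q : ℝ, a ≤ p → p < q → q ≤ b → ∃ t ∈ Set.Ioo p q, g t ≠ 0)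
    (hh : ContinuousOn h (Set.Icc a b))
    (hhpos : ∀ t ∈ Set.Icc a b, 0 < h t)
    (n : ℕ) (hn : 0 < n) :
    ∃ t : ℕ → ℝ, t 0 = a ∧ t n = b ∧ (∀ i < n, t i < t (i + 1)) ∧
      ∃ J : ℝ, ∀ i < n,
        (t (i + 1) - t i) * sSup (g '' Set.Icc (t i) (t (i + 1))) *
          sSup (h '' Set.Icc (t i) (t (i + 1))) = J :=
  (isMonotoneIntervalCost_mul_sSup hg hg0 hgnz hh hhpos).exists_equalizing_partition hab hn
end

section
/- Let g : [a,b] → ℝ be non-negative, continuous, and not identically zero on any open subinterval, and let h : [a,b] → ℝ be continuous and strictly positive. For each n, let Jₙ denote the common value of the quantities (tᵢ - tᵢ₋₁) · max_{[tᵢ₋₁,tᵢ]} g · max_{[tᵢ₋₁,tᵢ]} h for an equalizing n-partition (i.e., a partition making all these quantities equal). Then n·Jₙ → ∫ₐᵇ g(t)h(t) dt as n → ∞. -/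
open Set intervalIntegral MeasureTheory



lemma eqp_sSup_image {f : ℝ → ℝ} {p q : ℝ} (hpq : p ≤ q)
    (hf : ContinuousOn f (Set.Icc p q)) :
    ∃ x ∈ Set.Icc p q, (∀ y ∈ Set.Icc p q, f y ≤ f x) ∧
      sSup (f '' Set.Icc p q) = f x := by
  obtain ⟨x, hx, hs, hmax⟩ :=
    isCompact_Icc.exists_sSup_image_eq_and_ge (Set.nonempty_Icc.2 hpq) hf
  exact ⟨x, hx, hmax, hs⟩

lemma eqp_integral_pos {a b p q : ℝ} {g : ℝ → ℝ}
    (hg : ContinuousOn g (Set.Icc a b))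
    (hg0 : ∀ s ∈ Set.Icc a b, 0 ≤ g s)
    (hap : a ≤ p) (hpq : p < q) (hqb : q ≤ b)
    (t0 : ℝ) (ht0 : t0 ∈ Set.Ioo p q) (hgt0 : 0 < g t0) :
    0 < ∫ s in p..q, g s := by
  have hsub : Set.Icc p q ⊆ Set.Icc a b := Set.Icc_subset_Icc hap hqb
  have ht0ab : t0 ∈ Set.Icc a b := hsub (Set.mem_Icc.2 ⟨ht0.1.le, ht0.2.le⟩)
  -- continuity at t0 (t0 is in the interior of Icc a b)
  have hmem : Set.Icc a b ∈ nhds t0 :=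
    Icc_mem_nhds (lt_of_le_of_lt hap ht0.1) (lt_of_lt_of_le ht0.2 hqb)
  have hca : ContinuousAt g t0 := by
    have := hg t0 ht0ab
    rwa [ContinuousWithinAt, nhdsWithin_eq_nhds.2 hmem] at this
  have hev : ∀ᶠ y in nhds t0, g t0 / 2 < g y :=
    hca.eventually_const_lt (half_lt_self hgt0)
  rw [Metric.eventually_nhds_iff] at hev
  obtain ⟨ε, hε, hball⟩ := hev
  set u := max p (t0 - ε / 2) with hu
  set v := min q (t0 + ε / 2) with hv
  have huv : u < v := by
    apply max_lt <;> apply lt_min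
    · exact hpq
    · linarith [ht0.1]
    · linarith [ht0.2]
    · linarith
  have hpu : p ≤ u := le_max_left _ _
  have hvq : v ≤ q := min_le_left _ _
  have hgl : ∀ y ∈ Set.Icc u v, g t0 / 2 ≤ g y := by
    intro y hy
    refine (hball ?_).le
    have h1 : t0 - ε / 2 ≤ y := le_trans (le_max_right _ _) hy.1
    have h2 : y ≤ t0 + ε / 2 := le_trans hy.2 (min_le_right _ _)
    rw [Real.dist_eq, abs_lt]; constructor <;> linarith
  have hint : ∀ x y : ℝ, p ≤ x → x ≤ y → y ≤ q → IntervalIntegrable g volume x y := by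
    intro x y hx hxy hy
    apply ContinuousOn.intervalIntegrable
    apply hg.mono
    rw [Set.uIcc_of_le hxy]
    exact (Set.Icc_subset_Icc (le_trans hap hx) (le_trans hy hqb))
  have h1 : (0:ℝ) < ∫ s in u..v, g s := by
    have hc : IntervalIntegrable (fun _ : ℝ => g t0 / 2) volume u v :=
      intervalIntegrable_const
    have := intervalIntegral.integral_mono_on huv.le hc
      (hint u v hpu huv.le hvq) hgl
    rw [intervalIntegral.integral_const] at this
    have : (v - u) * (g t0 / 2) ≤ ∫ s in u..v, g s := by
      simpa [smul_eq_mul] using this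
    nlinarith [huv]
  have h2 : (0:ℝ) ≤ ∫ s in p..u, g s := by
    apply intervalIntegral.integral_nonneg hpu
    intro s hs
    exact hg0 s ⟨le_trans hap hs.1, le_trans hs.2 (le_trans (le_trans huv.le hvq) hqb)⟩
  have h3 : (0:ℝ) ≤ ∫ s in v..q, g s := by
    apply intervalIntegral.integral_nonneg hvq
    intro s hs
    exact hg0 s ⟨le_trans hap (le_trans hpu (le_trans huv.le hs.1)), le_trans hs.2 hqb⟩
  have huq : u ≤ q := le_trans huv.le hvq
  have hadd1 : (∫ s in p..u, g s) + (∫ s in u..q, g s) = ∫ s in p..q, g s :=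
    intervalIntegral.integral_add_adjacent_intervals (hint p u le_rfl hpu huq)
      (hint u q hpu huq le_rfl)
  have hadd2 : (∫ s in u..v, g s) + (∫ s in v..q, g s) = ∫ s in u..q, g s :=
    intervalIntegral.integral_add_adjacent_intervals (hint u v hpu huv.le hvq)
      (hint v q (le_trans hpu huv.le) hvq le_rfl)
  linarith

lemma eqp_mono {f : ℕ → ℝ} {n : ℕ} (hf : ∀ i < n, f i < f (i + 1)) :
    ∀ i j, i ≤ j → j ≤ n → f i ≤ f j := by
  intro i j hij hjn
  induction j with
  | zero => simp_all
  | succ k ih =>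
    rcases Nat.lt_or_ge i (k + 1) with hlt | hge
    · exact le_trans (ih (Nat.lt_succ_iff.mp hlt) (le_trans (Nat.le_succ k) hjn))
        (hf k (Nat.lt_of_succ_le hjn)).le
    · have : i = k + 1 := le_antisymm hij hge
      simp [this]

lemma eqp_mesh (a b : ℝ) (hab : a < b) (g h : ℝ → ℝ)
    (hg : ContinuousOn g (Set.Icc a b))
    (hg0 : ∀ s ∈ Set.Icc a b, 0 ≤ g s)
    (hgnz : ∀ p q : ℝ, a ≤ p → p < q → q ≤ b → ∃ s ∈ Set.Ioo p q, g s ≠ 0)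
    (hh : ContinuousOn h (Set.Icc a b))
    (hhpos : ∀ s ∈ Set.Icc a b, 0 < h s)
    (t : ℕ → ℕ → ℝ) (J : ℕ → ℝ)
    (hpart : ∀ n : ℕ, 0 < n →
      t n 0 = a ∧ t n n = b ∧ (∀ i < n, t n i < t n (i + 1)) ∧
      ∀ i < n,
        (t n (i + 1) - t n i) * sSup (g '' Set.Icc (t n i) (t n (i + 1))) *
          sSup (h '' Set.Icc (t n i) (t n (i + 1))) = J n)
    (eqp_integral_pos : ∀ p q : ℝ, a ≤ p → p < q → q ≤ b → 0 < ∫ s in p..q, g s)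
    (δ : ℝ) (hδ : 0 < δ) :
    ∀ᶠ n in Filter.atTop, ∀ i < n, t n (i + 1) - t n i < δ := by
  set δ' := min δ (b - a) with hδ'def
  have hδ' : 0 < δ' := lt_min hδ (by linarith)
  have hδ'b : δ' ≤ b - a := min_le_right _ _
  have hδ'δ : δ' ≤ δ := min_le_left _ _
  -- generic integrability
  have hint : ∀ x y : ℝ, a ≤ x → x ≤ y → y ≤ b → IntervalIntegrable g volume x y := by
    intro x y hx hxy hy
    apply ContinuousOn.intervalIntegrable
    apply hg.mono
    rw [Set.uIcc_of_le hxy]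
    exact Set.Icc_subset_Icc hx hy
  -- the primitive and its continuity
  set Gp : ℝ → ℝ := fun x => ∫ s in Set.Ioc a x, g s with hGpdef
  have hGpc : ContinuousOn Gp (Set.Icc a b) :=
    intervalIntegral.continuousOn_primitive (hg.integrableOn_Icc)
  have hGp : ∀ x, a ≤ x → Gp x = ∫ s in a..x, g s := by
    intro x hx
    rw [intervalIntegral.integral_of_le hx]
  -- the compact set of pairs
  set K : Set (ℝ × ℝ) :=
    (Set.Icc a b ×ˢ Set.Icc a b) ∩ {z : ℝ × ℝ | z.1 + δ' ≤ z.2} with hKdef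
  have hKc : IsCompact K :=
    (isCompact_Icc.prod isCompact_Icc).inter_right
      (isClosed_le (by fun_prop) continuous_snd)
  have hKne : K.Nonempty := by
    refine ⟨(a, a + δ'), ⟨⟨Set.left_mem_Icc.2 hab.le, ?_⟩, ?_⟩⟩
    · constructor <;> simp <;> linarith
    · simp
  set φ : ℝ × ℝ → ℝ := fun z => Gp z.2 - Gp z.1 with hφdef
  have hφc : ContinuousOn φ K := by
    apply ContinuousOn.sub
    · exact hGpc.comp continuous_snd.continuousOn (fun z hz => hz.1.2)
    · exact hGpc.comp continuous_fst.continuousOn (fun z hz => hz.1.1)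
  have hφval : ∀ z ∈ K, φ z = ∫ s in z.1..z.2, g s := by
    rintro ⟨p, q⟩ hz
    have h1 : a ≤ p := hz.1.1.1
    have h3 : q ≤ b := hz.1.2.2
    have h2 : p ≤ q := by have := hz.2; simp at this; linarith
    simp only [hφdef]
    rw [hGp q (le_trans h1 h2), hGp p h1]
    exact intervalIntegral.integral_interval_sub_left (hint a q le_rfl (le_trans h1 h2) h3)
      (hint a p le_rfl h1 (le_trans h2 h3))
  obtain ⟨z0, hz0K, hzmin⟩ := hKc.exists_isMinOn hKne hφc
  set c : ℝ := φ z0 with hcdef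
  have hcpos : 0 < c := by
    rw [hcdef, hφval z0 hz0K]
    have h1 : a ≤ z0.1 := hz0K.1.1.1
    have h3 : z0.2 ≤ b := hz0K.1.2.2
    have h2 : z0.1 < z0.2 := by have := hz0K.2; simp at this; linarith
    exact eqp_integral_pos _ _ h1 h2 h3
  -- minimum of h
  obtain ⟨xh, hxhmem, hxhmin⟩ :=
    isCompact_Icc.exists_isMinOn (Set.nonempty_Icc.2 hab.le) hh
  have hxhpos : 0 < h xh := hhpos xh hxhmem
  -- lower bound for sup of g on any interval of length δ'
  have hlow : ∀ p : ℝ, a ≤ p → p + δ' ≤ b →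
      c / δ' ≤ sSup (g '' Set.Icc p (p + δ')) := by
    intro p hap hpb
    obtain ⟨xm, hxm, hmax, hsup⟩ := eqp_sSup_image (by linarith : p ≤ p + δ')
      (hg.mono (Set.Icc_subset_Icc hap hpb))
    have hzK : (p, p + δ') ∈ K := by
      refine ⟨⟨?_, ?_⟩, ?_⟩
      · simp only [Set.mem_Icc]; constructor <;> linarith
      · simp only [Set.mem_Icc]; constructor <;> linarith
      · simp
    have hc1 : c ≤ ∫ s in p..(p + δ'), g s := by
      have h5 : φ z0 ≤ φ (p, p + δ') := hzmin hzK
      rwa [hφval _ hzK] at h5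
    have hc2 : (∫ s in p..(p + δ'), g s) ≤ g xm * δ' := by
      have hb := intervalIntegral.norm_integral_le_of_norm_le_const
        (C := g xm) (f := g) (a := p) (b := p + δ') ?_
      · have : |(∫ s in p..(p + δ'), g s)| ≤ g xm * |p + δ' - p| := hb
        rw [show p + δ' - p = δ' by ring, abs_of_pos hδ'] at this
        exact le_trans (le_abs_self _) this
      · intro x hx
        rw [Set.uIoc_of_le (by linarith : p ≤ p + δ')] at hx
        have hxI : x ∈ Set.Icc p (p + δ') := ⟨hx.1.le, hx.2⟩
        rw [Real.norm_eq_abs, abs_of_nonneg (hg0 x ⟨le_trans hap hxI.1, le_trans hxI.2 hpb⟩)]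
        exact hmax x hxI
    rw [hsup, div_le_iff₀ hδ']
    linarith
  -- global maxima of g and h
  obtain ⟨xg, hxgmem, hgmax, _⟩ := eqp_sSup_image hab.le hg
  obtain ⟨yh, hyhmem, hhmax, _⟩ := eqp_sSup_image hab.le hh
  set C : ℝ := (b - a) * (g xg * h yh) with hCdef
  -- upper bound on n * J n
  have hC : ∀ n : ℕ, 0 < n → (n : ℝ) * J n ≤ C := by
    intro n hn
    obtain ⟨h0, hnn, hlt, heq⟩ := hpart n hn
    have hmono := eqp_mono hlt
    have hmem : ∀ i ≤ n, t n i ∈ Set.Icc a b := by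
      intro i hi
      constructor
      · rw [← h0]; exact hmono 0 i (Nat.zero_le i) hi
      · rw [← hnn]; exact hmono i n hi le_rfl
    have hterm : ∀ i ∈ Finset.range n,
        (t n (i + 1) - t n i) * sSup (g '' Set.Icc (t n i) (t n (i + 1))) *
          sSup (h '' Set.Icc (t n i) (t n (i + 1)))
          ≤ (t n (i + 1) - t n i) * (g xg * h yh) := by
      intro i hi
      have hi' := Finset.mem_range.mp hi
      have hpq : t n i ≤ t n (i + 1) := (hlt i hi').le
      have hl : a ≤ t n i := (hmem i hi'.le).1
      have hr : t n (i + 1) ≤ b := (hmem (i + 1) hi').2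
      obtain ⟨x1, hx1, hm1, hs1⟩ := eqp_sSup_image hpq (hg.mono (Set.Icc_subset_Icc hl hr))
      obtain ⟨y1, hy1, hm2, hs2⟩ := eqp_sSup_image hpq (hh.mono (Set.Icc_subset_Icc hl hr))
      rw [hs1, hs2]
      have hx1ab : x1 ∈ Set.Icc a b := Set.Icc_subset_Icc hl hr hx1
      have hy1ab : y1 ∈ Set.Icc a b := Set.Icc_subset_Icc hl hr hy1
      have h1 : g x1 ≤ g xg := hgmax x1 hx1ab
      have h2 : h y1 ≤ h yh := hhmax y1 hy1ab
      have h3 : 0 ≤ g x1 := hg0 x1 hx1ab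
      have h4 : 0 ≤ h y1 := (hhpos y1 hy1ab).le
      have e1 : g x1 * h y1 ≤ g xg * h yh := mul_le_mul h1 h2 h4 (le_trans h3 h1)
      rw [mul_assoc]
      exact mul_le_mul_of_nonneg_left e1 (sub_nonneg.2 hpq)
    have hsum : (n : ℝ) * J n = ∑ i ∈ Finset.range n,
        (t n (i + 1) - t n i) * sSup (g '' Set.Icc (t n i) (t n (i + 1))) *
          sSup (h '' Set.Icc (t n i) (t n (i + 1))) := by
      rw [Finset.sum_congr rfl (fun i hi => heq i (Finset.mem_range.mp hi)),
        Finset.sum_const, Finset.card_range, nsmul_eq_mul]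
    calc (n : ℝ) * J n = _ := hsum
      _ ≤ ∑ i ∈ Finset.range n, (t n (i + 1) - t n i) * (g xg * h yh) :=
        Finset.sum_le_sum hterm
      _ = (∑ i ∈ Finset.range n, (t n (i + 1) - t n i)) * (g xg * h yh) := by
        rw [Finset.sum_mul]
      _ = C := by rw [Finset.sum_range_sub (fun i => t n i), h0, hnn]
  -- conclude
  obtain ⟨N, hN⟩ := exists_nat_gt (C / (c * h xh))
  have hch : 0 < c * h xh := mul_pos hcpos hxhpos
  have hCN : C < N * (c * h xh) := by
    rw [div_lt_iff₀ hch] at hN; linarith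
  filter_upwards [Filter.eventually_ge_atTop (max N 1)] with n hn
  intro i hi
  by_contra hcon
  push_neg at hcon
  have hδΔ : δ' ≤ t n (i + 1) - t n i := le_trans hδ'δ hcon
  have hn1 : 0 < n := lt_of_lt_of_le (Nat.lt_of_lt_of_le Nat.zero_lt_one (le_max_right N 1)) hn
  obtain ⟨h0, hnn, hlt, heq⟩ := hpart n hn1
  have hmono := eqp_mono hlt
  have hmem : ∀ j ≤ n, t n j ∈ Set.Icc a b := by
    intro j hj
    constructor
    · rw [← h0]; exact hmono 0 j (Nat.zero_le j) hj
    · rw [← hnn]; exact hmono j n hj le_rfl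
  have hl : a ≤ t n i := (hmem i hi.le).1
  have hr : t n (i + 1) ≤ b := (hmem (i + 1) hi).2
  have hpq : t n i ≤ t n (i + 1) := (hlt i hi).le
  -- lower bound J n ≥ c * h xh
  obtain ⟨x1, hx1, hm1, hs1⟩ := eqp_sSup_image hpq (hg.mono (Set.Icc_subset_Icc hl hr))
  obtain ⟨y1, hy1, hm2, hs2⟩ := eqp_sSup_image hpq (hh.mono (Set.Icc_subset_Icc hl hr))
  have hglow : c / δ' ≤ g x1 := by
    have hsb : t n i + δ' ≤ b := by linarith
    have := hlow (t n i) hl hsb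
    obtain ⟨x2, hx2, hm3, hs3⟩ := eqp_sSup_image (by linarith : t n i ≤ t n i + δ')
      (hg.mono (Set.Icc_subset_Icc hl hsb))
    rw [hs3] at this
    refine le_trans this (hm1 x2 ⟨hx2.1, by linarith [hx2.2]⟩)
  have hhlow : h xh ≤ h y1 := hxhmin (Set.Icc_subset_Icc hl hr hy1)
  have hJlow : c * h xh ≤ J n := by
    rw [← heq i hi, hs1, hs2]
    have e1 : δ' * (c / δ') ≤ (t n (i + 1) - t n i) * g x1 :=
      mul_le_mul hδΔ hglow (le_of_lt (div_pos hcpos hδ')) (by linarith)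
    have e2 : δ' * (c / δ') * h xh ≤ (t n (i + 1) - t n i) * g x1 * h y1 :=
      mul_le_mul e1 hhlow hxhpos.le
        (le_trans (by positivity) e1)
    have e3 : δ' * (c / δ') = c := by field_simp
    linarith [e2, e3 ▸ e2]
  have hub := hC n hn1
  have hnN : (N : ℝ) ≤ n := by exact_mod_cast le_trans (le_max_left N 1) hn
  have : (n : ℝ) * (c * h xh) ≤ (n : ℝ) * J n :=
    mul_le_mul_of_nonneg_left hJlow (Nat.cast_nonneg n)
  nlinarith



theorem equalizing_partition_tendsto_aux
    (a b : ℝ) (hab : a < b) (g h : ℝ → ℝ)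
    (hg : ContinuousOn g (Set.Icc a b))
    (hg0 : ∀ t ∈ Set.Icc a b, 0 ≤ g t)
    (hgnz : ∀ p q : ℝ, a ≤ p → p < q → q ≤ b → ∃ t ∈ Set.Ioo p q, g t ≠ 0)
    (hh : ContinuousOn h (Set.Icc a b))
    (hhpos : ∀ t ∈ Set.Icc a b, 0 < h t)
    (t : ℕ → ℕ → ℝ) (J : ℕ → ℝ)
    (hpart : ∀ n : ℕ, 0 < n →
      t n 0 = a ∧ t n n = b ∧ (∀ i < n, t n i < t n (i + 1)) ∧
      ∀ i < n,
        (t n (i + 1) - t n i) * sSup (g '' Set.Icc (t n i) (t n (i + 1))) *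
          sSup (h '' Set.Icc (t n i) (t n (i + 1))) = J n)
    (eqp_mono : ∀ (f : ℕ → ℝ) (n : ℕ), (∀ i < n, f i < f (i + 1)) →
      ∀ i j, i ≤ j → j ≤ n → f i ≤ f j)
    (eqp_sSup_image : ∀ (f : ℝ → ℝ) (p q : ℝ), p ≤ q → ContinuousOn f (Set.Icc p q) →
      ∃ x ∈ Set.Icc p q, (∀ y ∈ Set.Icc p q, f y ≤ f x) ∧ sSup (f '' Set.Icc p q) = f x)
    (hmesh : ∀ δ : ℝ, 0 < δ → ∀ᶠ n in Filter.atTop, ∀ i < n, t n (i + 1) - t n i < δ) :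
    Filter.Tendsto (fun n : ℕ => (n : ℝ) * J n) Filter.atTop
      (nhds (∫ s in a..b, g s * h s)) := by
  have hintgh : ∀ x y : ℝ, a ≤ x → x ≤ y → y ≤ b →
      IntervalIntegrable (fun s => g s * h s) volume x y := by
    intro x y hx hxy hy
    apply ContinuousOn.intervalIntegrable
    apply ContinuousOn.mono (hg.mul hh)
    rw [Set.uIcc_of_le hxy]
    exact Set.Icc_subset_Icc hx hy
  set I := ∫ s in a..b, g s * h s with hIdef
  rw [Metric.tendsto_atTop]
  intro ε hε
  set ε' := ε / (2 * (b - a)) with hε'def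
  have hba : 0 < b - a := by linarith
  have hε' : 0 < ε' := by positivity
  set P : ℝ × ℝ → ℝ := fun z => g z.1 * h z.2 with hPdef
  have hPc : ContinuousOn P (Set.Icc a b ×ˢ Set.Icc a b) :=
    (hg.comp continuous_fst.continuousOn fun z hz => hz.1).mul
      (hh.comp continuous_snd.continuousOn fun z hz => hz.2)
  have hPuc := (isCompact_Icc.prod isCompact_Icc).uniformContinuousOn_of_continuous hPc
  rw [Metric.uniformContinuousOn_iff] at hPuc
  obtain ⟨δ, hδ, hPδ⟩ := hPuc ε' hε'
  have hev := (hmesh δ hδ).and (Filter.eventually_ge_atTop 1)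
  rw [Filter.eventually_atTop] at hev
  obtain ⟨N, hN⟩ := hev
  refine ⟨N, fun n hn => ?_⟩
  obtain ⟨hmeshn, hn1⟩ := hN n hn
  have hn0 : 0 < n := hn1
  obtain ⟨h0, hnn, hlt, heq⟩ := hpart n hn0
  have hmono := eqp_mono (t n) n hlt
  have hmem : ∀ j ≤ n, t n j ∈ Set.Icc a b := by
    intro j hj
    constructor
    · rw [← h0]; exact hmono 0 j (Nat.zero_le j) hj
    · rw [← hnn]; exact hmono j n hj le_rfl
  have hsplit : I = ∑ i ∈ Finset.range n, ∫ s in (t n i)..(t n (i + 1)), g s * h s := by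
    rw [hIdef, ← h0, ← hnn]
    exact (intervalIntegral.sum_integral_adjacent_intervals (fun k hk =>
      hintgh _ _ (hmem k hk.le).1 (hlt k hk).le (hmem (k + 1) hk).2)).symm
  have hsum : (n : ℝ) * J n = ∑ i ∈ Finset.range n,
      (t n (i + 1) - t n i) * sSup (g '' Set.Icc (t n i) (t n (i + 1))) *
        sSup (h '' Set.Icc (t n i) (t n (i + 1))) := by
    rw [Finset.sum_congr rfl (fun i hi => heq i (Finset.mem_range.mp hi)),
      Finset.sum_const, Finset.card_range, nsmul_eq_mul]
  have hterm : ∀ i ∈ Finset.range n,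
      |(t n (i + 1) - t n i) * sSup (g '' Set.Icc (t n i) (t n (i + 1))) *
          sSup (h '' Set.Icc (t n i) (t n (i + 1))) -
        ∫ s in (t n i)..(t n (i + 1)), g s * h s| ≤ ε' * (t n (i + 1) - t n i) := by
    intro i hi
    have hi' := Finset.mem_range.mp hi
    have hpq : t n i ≤ t n (i + 1) := (hlt i hi').le
    have hl : a ≤ t n i := (hmem i hi'.le).1
    have hr : t n (i + 1) ≤ b := (hmem (i + 1) hi').2
    have hΔδ : t n (i + 1) - t n i < δ := hmeshn i hi'
    obtain ⟨x1, hx1, hm1, hs1⟩ := eqp_sSup_image g (t n i) (t n (i + 1)) hpq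
      (hg.mono (Set.Icc_subset_Icc hl hr))
    obtain ⟨y1, hy1, hm2, hs2⟩ := eqp_sSup_image h (t n i) (t n (i + 1)) hpq
      (hh.mono (Set.Icc_subset_Icc hl hr))
    rw [hs1, hs2]
    have hAB : (t n (i + 1) - t n i) * g x1 * h y1 -
        (∫ s in (t n i)..(t n (i + 1)), g s * h s) =
        ∫ s in (t n i)..(t n (i + 1)), (g x1 * h y1 - g s * h s) := by
      rw [intervalIntegral.integral_sub intervalIntegrable_const
        (hintgh _ _ hl hpq hr), intervalIntegral.integral_const, smul_eq_mul]
      ring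
    rw [hAB]
    have hbound : ∀ s ∈ Set.uIoc (t n i) (t n (i + 1)),
        ‖g x1 * h y1 - g s * h s‖ ≤ ε' := by
      intro s hs
      rw [Set.uIoc_of_le hpq] at hs
      have hsI : s ∈ Set.Icc (t n i) (t n (i + 1)) := ⟨hs.1.le, hs.2⟩
      have hsab : s ∈ Set.Icc a b := Set.Icc_subset_Icc hl hr hsI
      have hd : dist ((x1, y1) : ℝ × ℝ) ((s, s) : ℝ × ℝ) < δ := by
        rw [Prod.dist_eq]
        apply max_lt <;> rw [Real.dist_eq, abs_sub_lt_iff] <;> constructor <;>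
          first
          | linarith [hx1.1, hx1.2, hsI.1, hsI.2]
          | linarith [hy1.1, hy1.2, hsI.1, hsI.2]
      have h5 : dist (P (x1, y1)) (P (s, s)) < ε' := by
        refine hPδ (x1, y1) ?_ (s, s) ?_ hd
        · exact ⟨Set.Icc_subset_Icc hl hr hx1, Set.Icc_subset_Icc hl hr hy1⟩
        · exact ⟨hsab, hsab⟩
      simp only [hPdef] at h5
      rw [Real.dist_eq] at h5
      rw [Real.norm_eq_abs]
      exact h5.le
    have := intervalIntegral.norm_integral_le_of_norm_le_const hbound
    rw [Real.norm_eq_abs, abs_of_nonneg (by linarith : (0:ℝ) ≤ t n (i + 1) - t n i)] at this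
    linarith
  have hεhalf : ε' * (b - a) = ε / 2 := by
    rw [hε'def]; field_simp
  have hfinal : dist ((n : ℝ) * J n) I ≤ ε / 2 := by
    rw [Real.dist_eq, hsum, hsplit, ← Finset.sum_sub_distrib]
    calc |∑ i ∈ Finset.range n,
        ((t n (i + 1) - t n i) * sSup (g '' Set.Icc (t n i) (t n (i + 1))) *
          sSup (h '' Set.Icc (t n i) (t n (i + 1))) -
          ∫ s in (t n i)..(t n (i + 1)), g s * h s)|
        ≤ ∑ i ∈ Finset.range n,
          |(t n (i + 1) - t n i) * sSup (g '' Set.Icc (t n i) (t n (i + 1))) *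
            sSup (h '' Set.Icc (t n i) (t n (i + 1))) -
            ∫ s in (t n i)..(t n (i + 1)), g s * h s| :=
          Finset.abs_sum_le_sum_abs _ _
      _ ≤ ∑ i ∈ Finset.range n, ε' * (t n (i + 1) - t n i) := Finset.sum_le_sum hterm
      _ = ε' * ∑ i ∈ Finset.range n, (t n (i + 1) - t n i) := by rw [Finset.mul_sum]
      _ = ε' * (b - a) := by rw [Finset.sum_range_sub (fun i => t n i), h0, hnn]
      _ = ε / 2 := hεhalf
  linarith [hfinal]


/-- If for each `n` we have an equalizing `n`-partition with common value `J n`,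
then `n * J n → ∫ₐᵇ g h`. -/
theorem equalizing_partition_tendsto
    (a b : ℝ) (hab : a < b) (g h : ℝ → ℝ)
    (hg : ContinuousOn g (Set.Icc a b))
    (hg0 : ∀ t ∈ Set.Icc a b, 0 ≤ g t)
    (hgnz : ∀ p q : ℝ, a ≤ p → p < q → q ≤ b → ∃ t ∈ Set.Ioo p q, g t ≠ 0)
    (hh : ContinuousOn h (Set.Icc a b))
    (hhpos : ∀ t ∈ Set.Icc a b, 0 < h t)
    (t : ℕ → ℕ → ℝ) (J : ℕ → ℝ)
    (hpart : ∀ n : ℕ, 0 < n →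
      t n 0 = a ∧ t n n = b ∧ (∀ i < n, t n i < t n (i + 1)) ∧
      ∀ i < n,
        (t n (i + 1) - t n i) * sSup (g '' Set.Icc (t n i) (t n (i + 1))) *
          sSup (h '' Set.Icc (t n i) (t n (i + 1))) = J n) :
    Filter.Tendsto (fun n : ℕ => (n : ℝ) * J n) Filter.atTop
      (nhds (∫ s in a..b, g s * h s)) := by
  have hipos : ∀ p q : ℝ, a ≤ p → p < q → q ≤ b → 0 < ∫ s in p..q, g s := by
    intro p q hap hpq hqb
    obtain ⟨t0, ht0, hne⟩ := hgnz p q hap hpq hqb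
    exact eqp_integral_pos hg hg0 hap hpq hqb t0 ht0
      (lt_of_le_of_ne (hg0 t0 ⟨le_trans hap ht0.1.le, le_trans ht0.2.le hqb⟩) (Ne.symm hne))
  exact equalizing_partition_tendsto_aux a b hab g h hg hg0 hgnz hh hhpos t J hpart
    (fun f n hf => eqp_mono hf)
    (fun f p q hpq hf => eqp_sSup_image hpq hf)
    (eqp_mesh a b hab g h hg hg0 hgnz hh hhpos t J hpart hipos)
end

section
/- Let f, g ∈ C¹[a,b] with g'(t) > 0 for all t ∈ [a,b]. Then ∫ₐᵇ f(t) dg(t) − (g(b) − g(a)) · min_{t ∈ [a,b]} f(t) ≤ (1/2)(b − a)² · ‖f'‖_∞ · ‖g'‖_∞. -/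
open Set MeasureTheory intervalIntegral

/-- `∫ₐᵇ f dg − (g b − g a)·min f ≤ ½(b−a)²‖f'‖‖g'‖`. -/
theorem lower_sum_estimate
    (a b : ℝ) (hab : a < b) (f g f' g' : ℝ → ℝ)
    (hf : ∀ t ∈ Set.Icc a b, HasDerivWithinAt f (f' t) (Set.Icc a b) t)
    (hf' : ContinuousOn f' (Set.Icc a b))
    (hg : ∀ t ∈ Set.Icc a b, HasDerivWithinAt g (g' t) (Set.Icc a b) t)
    (hg' : ContinuousOn g' (Set.Icc a b))
    (hgpos : ∀ t ∈ Set.Icc a b, 0 < g' t) :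
    (∫ t in a..b, f t * g' t) - (g b - g a) * sInf (f '' Set.Icc a b) ≤
      (1 / 2) * (b - a) ^ 2 * sSup ((fun t => |f' t|) '' Set.Icc a b) *
        sSup ((fun t => |g' t|) '' Set.Icc a b) := by
  have hab' : a ≤ b := hab.le
  have huIcc : Set.uIcc a b = Set.Icc a b := Set.uIcc_of_le hab'
  have hfc : ContinuousOn f (Icc a b) := fun t ht => (hf t ht).continuousWithinAt
  have hgc : ContinuousOn g (Icc a b) := fun t ht => (hg t ht).continuousWithinAt
  have hcomp : IsCompact (Icc a b) := isCompact_Icc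
  have hne : (Icc a b).Nonempty := nonempty_Icc.2 hab'
  obtain ⟨t₀, ht₀, hmin⟩ := hcomp.exists_isMinOn hne hfc
  set m := sInf (f '' Icc a b) with hm
  have hm_eq : m = f t₀ := by
    apply le_antisymm
    · exact csInf_le (hcomp.image_of_continuousOn hfc).bddBelow ⟨t₀, ht₀, rfl⟩
    · apply le_csInf (hne.image f)
      rintro y ⟨x, hx, rfl⟩
      exact hmin hx
  set Mf := sSup ((fun t => |f' t|) '' Icc a b) with hMfdef
  set Mg := sSup ((fun t => |g' t|) '' Icc a b) with hMgdef
  have hMf : ∀ t ∈ Icc a b, |f' t| ≤ Mf := fun t ht =>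
    le_csSup (hcomp.bddAbove_image hf'.abs) ⟨t, ht, rfl⟩
  have hMg : ∀ t ∈ Icc a b, |g' t| ≤ Mg := fun t ht =>
    le_csSup (hcomp.bddAbove_image hg'.abs) ⟨t, ht, rfl⟩
  have hMf0 : 0 ≤ Mf := le_trans (abs_nonneg _) (hMf t₀ ht₀)
  have hMg0 : 0 ≤ Mg := le_trans (abs_nonneg _) (hMg t₀ ht₀)
  -- integrability
  have hgint : IntervalIntegrable g' volume a b :=
    (hg'.mono huIcc.subset).intervalIntegrable
  have hfgint : IntervalIntegrable (fun t => f t * g' t) volume a b :=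
    ((hfc.mul hg').mono huIcc.subset).intervalIntegrable
  have hmgint : IntervalIntegrable (fun t => m * g' t) volume a b := hgint.const_mul m
  -- FTC for g
  have hftc : ∫ t in a..b, g' t = g b - g a := by
    apply intervalIntegral.integral_eq_sub_of_hasDeriv_right_of_le hab' hgc _ hgint
    intro t ht
    exact ((hg t (Ioo_subset_Icc_self ht)).hasDerivAt
      (Icc_mem_nhds ht.1 ht.2)).hasDerivWithinAt
  have hLHS : (∫ t in a..b, f t * g' t) - (g b - g a) * m
      = ∫ t in a..b, (f t - m) * g' t := by
    rw [← hftc]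
    have := intervalIntegral.integral_sub hfgint hmgint
    simp only [sub_mul] at this ⊢
    rw [this, intervalIntegral.integral_const_mul, mul_comm]
  -- pointwise bound
  have key : ∀ t ∈ Icc a b, (f t - m) * g' t ≤ Mf * |t - t₀| * Mg := by
    intro t ht
    have h1 : 0 ≤ f t - m := by rw [hm_eq]; exact sub_nonneg.2 (hmin ht)
    have h2 : f t - m ≤ Mf * |t - t₀| := by
      rw [hm_eq]
      have := Convex.norm_image_sub_le_of_norm_hasDerivWithin_le hf
        (fun x hx => by rw [Real.norm_eq_abs]; exact hMf x hx)
        (convex_Icc a b) ht₀ ht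
      calc f t - f t₀ ≤ |f t - f t₀| := le_abs_self _
        _ ≤ Mf * |t - t₀| := by
            simpa [Real.norm_eq_abs] using this
    have h3 : g' t ≤ Mg := le_trans (le_abs_self _) (hMg t ht)
    exact mul_le_mul h2 h3 (hgpos t ht).le (by positivity)
  -- integral comparison
  have habscont : ContinuousOn (fun t : ℝ => Mf * |t - t₀| * Mg) (Icc a b) := by
    fun_prop
  have hrint : IntervalIntegrable (fun t : ℝ => Mf * |t - t₀| * Mg) volume a b :=
    (habscont.mono huIcc.subset).intervalIntegrable
  have hlint : IntervalIntegrable (fun t => (f t - m) * g' t) volume a b :=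
    (((hfc.sub continuousOn_const).mul hg').mono huIcc.subset).intervalIntegrable
  have hmono : (∫ t in a..b, (f t - m) * g' t) ≤ ∫ t in a..b, Mf * |t - t₀| * Mg := by
    apply intervalIntegral.integral_mono_on hab' hlint hrint
    intro t ht
    exact key t ht
  -- compute the right integral
  have htabs : IntervalIntegrable (fun t : ℝ => |t - t₀|) volume a b :=
    (Continuous.intervalIntegrable (by fun_prop) a b)
  have hsplitint : (∫ t in a..b, |t - t₀|) = (∫ t in a..t₀, |t - t₀|) + ∫ t in t₀..b, |t - t₀| := by
    rw [intervalIntegral.integral_add_adjacent_intervals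
      (Continuous.intervalIntegrable (by fun_prop) a t₀)
      (Continuous.intervalIntegrable (by fun_prop) t₀ b)]
  have h1 : (∫ t in a..t₀, |t - t₀|) = (t₀ - a)^2 / 2 := by
    have : (∫ t in a..t₀, |t - t₀|) = ∫ t in a..t₀, (t₀ - t) := by
      apply intervalIntegral.integral_congr
      intro t ht
      rw [Set.uIcc_of_le ht₀.1] at ht
      show |t - t₀| = t₀ - t
      rw [abs_of_nonpos (by linarith [ht.2])]
      ring
    rw [this, intervalIntegral.integral_sub intervalIntegrable_const
      intervalIntegrable_id]
    simp [integral_id]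
    ring
  have h2 : (∫ t in t₀..b, |t - t₀|) = (b - t₀)^2 / 2 := by
    have : (∫ t in t₀..b, |t - t₀|) = ∫ t in t₀..b, (t - t₀) := by
      apply intervalIntegral.integral_congr
      intro t ht
      rw [Set.uIcc_of_le ht₀.2] at ht
      show |t - t₀| = t - t₀
      exact abs_of_nonneg (by linarith [ht.1])
    rw [this, intervalIntegral.integral_sub intervalIntegrable_id
      intervalIntegrable_const]
    simp [integral_id]
    ring
  have hcalc : (∫ t in a..b, Mf * |t - t₀| * Mg) ≤ (1/2) * (b-a)^2 * Mf * Mg := by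
    have : (∫ t in a..b, Mf * |t - t₀| * Mg)
        = Mf * Mg * ∫ t in a..b, |t - t₀| := by
      rw [← intervalIntegral.integral_const_mul]
      apply intervalIntegral.integral_congr
      intro t _
      ring
    rw [this, hsplitint, h1, h2]
    have hprod : 0 ≤ (t₀ - a) * (b - t₀) := mul_nonneg (by linarith [ht₀.1]) (by linarith [ht₀.2])
    nlinarith [mul_nonneg hMf0 hMg0, mul_nonneg (mul_nonneg hMf0 hMg0) hprod]
  calc (∫ t in a..b, f t * g' t) - (g b - g a) * m
      = ∫ t in a..b, (f t - m) * g' t := hLHS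
    _ ≤ ∫ t in a..b, Mf * |t - t₀| * Mg := hmono
    _ ≤ (1/2) * (b-a)^2 * Mf * Mg := hcalc
end

section
/- Let f, g ∈ C¹[a,b] with g' > 0 on [a,b], and suppose f'(t) ≠ 0 for all t in a subinterval [p,q] ⊆ [a,b]. Then for every ξ ∈ [p,q], | ∫ₚ^q f(t) dg(t) − (g(q) − g(p)) · min_{[p,q]} f − (1/2)(q − p)² |f'(ξ)| g'(ξ) | ≤ (1/2)(q − p)² (‖g'‖_∞ · ω(f', q − p) + ‖f'‖_∞ · ω(g', q − p)), where ω(h, δ) = sup{|h(x) − h(y)| : x, y ∈ [a,b], |x − y| ≤ δ} is the modulus of continuity. -/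
/-- Modulus of continuity of `h` on `[a,b]` with step `δ`. -/
noncomputable def modCont (a b : ℝ) (h : ℝ → ℝ) (δ : ℝ) : ℝ :=
  sSup ((fun p : ℝ × ℝ => |h p.1 - h p.2|) ''
    {p : ℝ × ℝ | p.1 ∈ Set.Icc a b ∧ p.2 ∈ Set.Icc a b ∧ |p.1 - p.2| ≤ δ})

lemma modCont_spec (a b δ : ℝ) (h : ℝ → ℝ) (hc : ContinuousOn h (Set.Icc a b))
    (x y : ℝ) (hx : x ∈ Set.Icc a b) (hy : y ∈ Set.Icc a b) (hxy : |x - y| ≤ δ) :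
    |h x - h y| ≤ modCont a b h δ := by
  apply le_csSup
  · have hKeq : {p : ℝ × ℝ | p.1 ∈ Set.Icc a b ∧ p.2 ∈ Set.Icc a b ∧ |p.1 - p.2| ≤ δ}
        = (Set.Icc a b ×ˢ Set.Icc a b) ∩ {p : ℝ × ℝ | |p.1 - p.2| ≤ δ} := by
      ext z
      simp only [Set.mem_setOf_eq, Set.mem_inter_iff, Set.mem_prod]
      tauto
    have hK : IsCompact {p : ℝ × ℝ | p.1 ∈ Set.Icc a b ∧ p.2 ∈ Set.Icc a b ∧ |p.1 - p.2| ≤ δ} := by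
      rw [hKeq]
      exact (isCompact_Icc.prod isCompact_Icc).inter_right
        (isClosed_le (by fun_prop) continuous_const)
    have hcont : ContinuousOn (fun p : ℝ × ℝ => |h p.1 - h p.2|)
        {p : ℝ × ℝ | p.1 ∈ Set.Icc a b ∧ p.2 ∈ Set.Icc a b ∧ |p.1 - p.2| ≤ δ} :=
      ((hc.comp continuousOn_fst (fun z hz => hz.1)).sub
        (hc.comp continuousOn_snd (fun z hz => hz.2.1))).abs
    exact (hK.image_of_continuousOn hcont).bddAbove
  · exact ⟨(x, y), ⟨hx, hy, hxy⟩, rfl⟩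

lemma sup_abs_spec (a b : ℝ) (h : ℝ → ℝ) (hc : ContinuousOn h (Set.Icc a b))
    (x : ℝ) (hx : x ∈ Set.Icc a b) : |h x| ≤ sSup ((fun t => |h t|) '' Set.Icc a b) :=
  le_csSup (isCompact_Icc.image_of_continuousOn hc.abs).bddAbove ⟨x, hx, rfl⟩

lemma mvt_aux (a b : ℝ) (f f' : ℝ → ℝ)
    (hf : ∀ t ∈ Set.Icc a b, HasDerivWithinAt f (f' t) (Set.Icc a b) t)
    (u v : ℝ) (hu : a ≤ u) (huv : u < v) (hv : v ≤ b) :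
    ∃ c ∈ Set.Ioo u v, f v - f u = (v - u) * f' c := by
  have hsub : Set.Icc u v ⊆ Set.Icc a b := Set.Icc_subset_Icc hu hv
  have hcont : ContinuousOn f (Set.Icc u v) :=
    fun t ht => ((hf t (hsub ht)).continuousWithinAt).mono hsub
  have hderiv : ∀ x ∈ Set.Ioo u v, HasDerivAt f (f' x) x := by
    intro x hx
    have hx' : a < x ∧ x < b := ⟨lt_of_le_of_lt hu hx.1, lt_of_lt_of_le hx.2 hv⟩
    exact (hf x ⟨hx'.1.le, hx'.2.le⟩).hasDerivAt (Icc_mem_nhds hx'.1 hx'.2)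
  obtain ⟨c, hc, hceq⟩ := exists_hasDerivAt_eq_slope f f' huv hcont hderiv
  refine ⟨c, hc, ?_⟩
  rw [hceq]
  field_simp [sub_ne_zero.mpr huv.ne']

/-- Estimate for the local lower Riemann–Stieltjes error in terms of moduli of continuity. -/
theorem local_error_modulus
    (a b : ℝ) (hab : a < b) (f g f' g' : ℝ → ℝ)
    (hf : ∀ t ∈ Set.Icc a b, HasDerivWithinAt f (f' t) (Set.Icc a b) t)
    (hf' : ContinuousOn f' (Set.Icc a b))
    (hg : ∀ t ∈ Set.Icc a b, HasDerivWithinAt g (g' t) (Set.Icc a b) t)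
    (hg' : ContinuousOn g' (Set.Icc a b))
    (hgpos : ∀ t ∈ Set.Icc a b, 0 < g' t)
    (p q : ℝ) (hap : a ≤ p) (hpq : p < q) (hqb : q ≤ b)
    (hfne : ∀ t ∈ Set.Icc p q, f' t ≠ 0)
    (ξ : ℝ) (hξ : ξ ∈ Set.Icc p q) :
    |(∫ t in p..q, f t * g' t) - (g q - g p) * sInf (f '' Set.Icc p q) -
        (1 / 2) * (q - p) ^ 2 * |f' ξ| * g' ξ| ≤
      (1 / 2) * (q - p) ^ 2 *
        (sSup ((fun t => |g' t|) '' Set.Icc a b) * modCont a b f' (q - p) +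
         sSup ((fun t => |f' t|) '' Set.Icc a b) * modCont a b g' (q - p)) := by
  have hpq' : p ≤ q := hpq.le
  have hsub : Set.Icc p q ⊆ Set.Icc a b := Set.Icc_subset_Icc hap hqb
  have hξab : ξ ∈ Set.Icc a b := hsub hξ
  have hfc : ContinuousOn f (Set.Icc a b) := fun t ht => (hf t ht).continuousWithinAt
  have hgc : ContinuousOn g (Set.Icc a b) := fun t ht => (hg t ht).continuousWithinAt
  set Cg := sSup ((fun t => |g' t|) '' Set.Icc a b) with hCg
  set Cf := sSup ((fun t => |f' t|) '' Set.Icc a b) with hCf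
  set ωf := modCont a b f' (q - p) with hωf
  set ωg := modCont a b g' (q - p) with hωg
  set C := Cg * ωf + Cf * ωg with hC
  have habs_le : ∀ x ∈ Set.Icc p q, ∀ y ∈ Set.Icc p q, |x - y| ≤ q - p := by
    intro x hx y hy
    rw [abs_sub_le_iff]
    constructor <;> [linarith [hx.2, hy.1]; linarith [hx.1, hy.2]]
  -- FTC for g
  have hg'int : IntervalIntegrable g' MeasureTheory.volume p q :=
    (hg'.mono hsub).intervalIntegrable_of_Icc hpq'
  have hftc : (∫ t in p..q, g' t) = g q - g p := by
    apply intervalIntegral.integral_eq_sub_of_hasDeriv_right_of_le hpq'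
      ((hgc.mono hsub)) ?_ hg'int
    intro x hx
    have hx' : a < x ∧ x < b := ⟨lt_of_le_of_lt hap hx.1, lt_of_lt_of_le hx.2 hqb⟩
    exact (((hg x ⟨hx'.1.le, hx'.2.le⟩).hasDerivAt
      (Icc_mem_nhds hx'.1 hx'.2)).hasDerivWithinAt)
  -- elementary integrals
  have h2 : (∫ t in p..q, (t - p)) = (q - p) ^ 2 / 2 := by
    rw [intervalIntegral.integral_comp_sub_right (fun t => t) p, integral_id]
    ring
  have h2' : (∫ t in p..q, (q - t)) = (q - p) ^ 2 / 2 := by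
    rw [intervalIntegral.integral_sub (intervalIntegrable_const)
      intervalIntegral.intervalIntegrable_id, integral_id,
      intervalIntegral.integral_const]
    simp only [smul_eq_mul]
    ring
  -- integrabilities
  have hfgint : IntervalIntegrable (fun t => f t * g' t) MeasureTheory.volume p q :=
    (((hfc.mono hsub)).mul (hg'.mono hsub)).intervalIntegrable_of_Icc hpq'
  have hcmul : ∀ m : ℝ, IntervalIntegrable (fun t => m * g' t) MeasureTheory.volume p q :=
    fun m => hg'int.const_mul m
  -- sign dichotomy
  have hf'c : ContinuousOn f' (Set.Icc p q) := hf'.mono hsub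
  have hsign : (∀ t ∈ Set.Icc p q, 0 < f' t) ∨ (∀ t ∈ Set.Icc p q, f' t < 0) := by
    rcases lt_or_gt_of_ne (hfne p ⟨le_refl p, hpq'⟩) with hneg | hpos
    · right; intro t ht
      by_contra hcon
      have hpos' : 0 < f' t := lt_of_le_of_ne (not_lt.mp hcon) (Ne.symm (hfne t ht))
      obtain ⟨c, hc, hc0⟩ := intermediate_value_Icc ht.1
        (hf'c.mono (Set.Icc_subset_Icc le_rfl ht.2))
        (⟨hneg.le, hpos'.le⟩ : (0 : ℝ) ∈ Set.Icc (f' p) (f' t))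
      exact hfne c (Set.Icc_subset_Icc le_rfl ht.2 hc) hc0
    · left; intro t ht
      by_contra hcon
      have hneg' : f' t < 0 := lt_of_le_of_ne (not_lt.mp hcon) (hfne t ht)
      obtain ⟨c, hc, hc0⟩ := intermediate_value_Icc' ht.1
        (hf'c.mono (Set.Icc_subset_Icc le_rfl ht.2))
        (⟨hneg'.le, hpos.le⟩ : (0 : ℝ) ∈ Set.Icc (f' t) (f' p))
      exact hfne c (Set.Icc_subset_Icc le_rfl ht.2 hc) hc0
  rcases hsign with hpos | hneg
  · -- f' > 0 on [p,q]
    have hmin : sInf (f '' Set.Icc p q) = f p := by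
      apply IsLeast.csInf_eq
      refine ⟨⟨p, ⟨le_refl p, hpq'⟩, rfl⟩, ?_⟩
      rintro y ⟨t, ht, rfl⟩
      rcases eq_or_lt_of_le ht.1 with h | h
      · rw [← h]
      · obtain ⟨c, hc, hceq⟩ := mvt_aux a b f f' hf p t hap h (ht.2.trans hqb)
        have hcpos : 0 < f' c := hpos c ⟨hc.1.le, hc.2.le.trans ht.2⟩
        nlinarith
    have habsξ : |f' ξ| = f' ξ := abs_of_pos (hpos ξ hξ)
    set F : ℝ → ℝ := fun t => f t * g' t - f p * g' t - (t - p) * (f' ξ * g' ξ) with hF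
    have hFcont : ContinuousOn F (Set.Icc p q) :=
      (((hfc.mono hsub).mul (hg'.mono hsub)).sub
        ((continuousOn_const).mul (hg'.mono hsub))).sub (by fun_prop)
    have hkey : (∫ t in p..q, f t * g' t) - (g q - g p) * sInf (f '' Set.Icc p q) -
        (1 / 2) * (q - p) ^ 2 * |f' ξ| * g' ξ = ∫ t in p..q, F t := by
      rw [hmin, habsξ, hF]
      rw [intervalIntegral.integral_sub (hfgint.sub (hcmul (f p)))
        (by apply IntervalIntegrable.mul_const; exact
          (by fun_prop : Continuous fun t : ℝ => t - p).intervalIntegrable p q),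
        intervalIntegral.integral_sub hfgint (hcmul (f p)),
        intervalIntegral.integral_const_mul, hftc,
        intervalIntegral.integral_mul_const, h2]
      ring
    have hbound : ∀ t ∈ Set.Icc p q, |F t| ≤ (t - p) * C := by
      intro t ht
      rcases eq_or_lt_of_le ht.1 with h | h
      · rw [← h]; simp [hF]
      · obtain ⟨c, hc, hceq⟩ := mvt_aux a b f f' hf p t hap h (ht.2.trans hqb)
        have hcab : c ∈ Set.Icc a b := hsub ⟨hc.1.le, hc.2.le.trans ht.2⟩
        have htab : t ∈ Set.Icc a b := hsub ht
        have h1 : |f' c - f' ξ| ≤ ωf := modCont_spec a b (q - p) f' hf' c ξ hcab hξab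
          (habs_le c ⟨hc.1.le, hc.2.le.trans ht.2⟩ ξ hξ)
        have h2g : |g' t| ≤ Cg := sup_abs_spec a b g' hg' t htab
        have h3 : |f' ξ| ≤ Cf := sup_abs_spec a b f' hf' ξ hξab
        have h4 : |g' t - g' ξ| ≤ ωg := modCont_spec a b (q - p) g' hg' t ξ htab hξab
          (habs_le t ht ξ hξ)
        have hrw : F t = (t - p) * ((f' c - f' ξ) * g' t + f' ξ * (g' t - g' ξ)) := by
          rw [hF]; linear_combination g' t * hceq
        rw [hrw, abs_mul, abs_of_nonneg (sub_nonneg.mpr ht.1)]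
        apply mul_le_mul_of_nonneg_left ?_ (sub_nonneg.mpr ht.1)
        calc |(f' c - f' ξ) * g' t + f' ξ * (g' t - g' ξ)|
            ≤ |f' c - f' ξ| * |g' t| + |f' ξ| * |g' t - g' ξ| := by
              refine (abs_add_le _ _).trans ?_
              rw [abs_mul, abs_mul]
          _ ≤ C := by
              rw [hC]
              refine add_le_add ?_ ?_
              · rw [mul_comm Cg ωf]
                exact mul_le_mul h1 h2g (abs_nonneg _) ((abs_nonneg _).trans h1)
              · exact mul_le_mul h3 h4 (abs_nonneg _) ((abs_nonneg _).trans h3)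
    rw [hkey]
    calc |∫ t in p..q, F t| ≤ ∫ t in p..q, |F t| :=
          intervalIntegral.abs_integral_le_integral_abs hpq'
      _ ≤ ∫ t in p..q, (t - p) * C := by
          apply intervalIntegral.integral_mono_on hpq'
            (hFcont.abs.intervalIntegrable_of_Icc hpq')
            ((by fun_prop : Continuous fun t : ℝ => (t - p) * C).intervalIntegrable p q)
            hbound
      _ = 1 / 2 * (q - p) ^ 2 * C := by
          rw [intervalIntegral.integral_mul_const, h2]; ring
  · -- f' < 0 on [p,q]
    have hmin : sInf (f '' Set.Icc p q) = f q := by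
      apply IsLeast.csInf_eq
      refine ⟨⟨q, ⟨hpq', le_refl q⟩, rfl⟩, ?_⟩
      rintro y ⟨t, ht, rfl⟩
      rcases eq_or_lt_of_le ht.2 with h | h
      · rw [h]
      · obtain ⟨c, hc, hceq⟩ := mvt_aux a b f f' hf t q (hap.trans ht.1) h hqb
        have hcneg : f' c < 0 := hneg c ⟨ht.1.trans hc.1.le, hc.2.le⟩
        nlinarith
    have habsξ : |f' ξ| = -f' ξ := abs_of_neg (hneg ξ hξ)
    set F : ℝ → ℝ := fun t => f t * g' t - f q * g' t - (q - t) * (-f' ξ * g' ξ) with hF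
    have hFcont : ContinuousOn F (Set.Icc p q) :=
      (((hfc.mono hsub).mul (hg'.mono hsub)).sub
        ((continuousOn_const).mul (hg'.mono hsub))).sub (by fun_prop)
    have hkey : (∫ t in p..q, f t * g' t) - (g q - g p) * sInf (f '' Set.Icc p q) -
        (1 / 2) * (q - p) ^ 2 * |f' ξ| * g' ξ = ∫ t in p..q, F t := by
      rw [hmin, habsξ, hF]
      rw [intervalIntegral.integral_sub (hfgint.sub (hcmul (f q)))
        (by apply IntervalIntegrable.mul_const; exact
          (by fun_prop : Continuous fun t : ℝ => q - t).intervalIntegrable p q),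
        intervalIntegral.integral_sub hfgint (hcmul (f q)),
        intervalIntegral.integral_const_mul, hftc,
        intervalIntegral.integral_mul_const, h2']
      ring
    have hbound : ∀ t ∈ Set.Icc p q, |F t| ≤ (q - t) * C := by
      intro t ht
      rcases eq_or_lt_of_le ht.2 with h | h
      · rw [h]; simp [hF]
      · obtain ⟨c, hc, hceq⟩ := mvt_aux a b f f' hf t q (hap.trans ht.1) h hqb
        have hcab : c ∈ Set.Icc a b := hsub ⟨ht.1.trans hc.1.le, hc.2.le⟩
        have htab : t ∈ Set.Icc a b := hsub ht
        have h1 : |f' ξ - f' c| ≤ ωf := modCont_spec a b (q - p) f' hf' ξ c hξab hcab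
          (habs_le ξ hξ c ⟨ht.1.trans hc.1.le, hc.2.le⟩)
        have h2g : |g' t| ≤ Cg := sup_abs_spec a b g' hg' t htab
        have h3 : |-f' ξ| ≤ Cf := by rw [abs_neg]; exact sup_abs_spec a b f' hf' ξ hξab
        have h4 : |g' t - g' ξ| ≤ ωg := modCont_spec a b (q - p) g' hg' t ξ htab hξab
          (habs_le t ht ξ hξ)
        have hrw : F t = (q - t) * ((f' ξ - f' c) * g' t + (-f' ξ) * (g' t - g' ξ)) := by
          rw [hF]; linear_combination (-(g' t)) * hceq
        rw [hrw, abs_mul, abs_of_nonneg (sub_nonneg.mpr ht.2)]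
        apply mul_le_mul_of_nonneg_left ?_ (sub_nonneg.mpr ht.2)
        calc |(f' ξ - f' c) * g' t + (-f' ξ) * (g' t - g' ξ)|
            ≤ |f' ξ - f' c| * |g' t| + |-f' ξ| * |g' t - g' ξ| := by
              refine (abs_add_le _ _).trans ?_
              rw [abs_mul, abs_mul]
          _ ≤ C := by
              rw [hC]
              refine add_le_add ?_ ?_
              · rw [mul_comm Cg ωf]
                exact mul_le_mul h1 h2g (abs_nonneg _) ((abs_nonneg _).trans h1)
              · exact mul_le_mul h3 h4 (abs_nonneg _) ((abs_nonneg _).trans h3)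
    rw [hkey]
    calc |∫ t in p..q, F t| ≤ ∫ t in p..q, |F t| :=
          intervalIntegral.abs_integral_le_integral_abs hpq'
      _ ≤ ∫ t in p..q, (q - t) * C := by
          apply intervalIntegral.integral_mono_on hpq'
            (hFcont.abs.intervalIntegrable_of_Icc hpq')
            ((by fun_prop : Continuous fun t : ℝ => (q - t) * C).intervalIntegrable p q)
            hbound
      _ = 1 / 2 * (q - p) ^ 2 * C := by
          rw [intervalIntegral.integral_mul_const, h2']; ring
end

section
/- Let f ∈ C¹[a,b] have a derivative f' with finitely many zeros, and let g ∈ C¹[a,b] with g' > 0 on [a,b]. For each n let LS_opt(n) be the maximum over all n-point partitions Δ of [a,b] of the lower Riemann–Stieltjes sum Σᵢ (min_{[tᵢ₋₁,tᵢ]} f)(g(tᵢ) − g(tᵢ₋₁)). Then limsup_{n→∞} n·(∫ₐᵇ f dg − LS_opt(n)) ≤ (1/2)(∫ₐᵇ √(|f'(t)| g'(t)) dt)². -/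
/-!
Fix `η > 0`, put `A = ∫ √(|f'| g')` and cut `[a, b]` into `n` pieces of equal mass
`c = (A + η (b - a)) / n` for the density `φ = √(|f'| g') + η`. As `φ ≥ η`, every piece has length
at most `c / η`, which is small for large `n`. On a piece `[u, v]` the lower sum misses
`∫ (f - min f) g' ≤ ½ M G (v - u)²`, where `M`, `G` are the maxima of `|f'|` and `g'` there; by
uniform continuity `√(M G) ≤ φ` on a short piece, so `√(M G) (v - u) ≤ c` and the piece misses at
most `c² / 2`. Summing, `n (∫ f dg - LS_opt(n)) ≤ n · n c² / 2 = ½ (A + η (b - a))²`, and `η → 0`.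
-/

/-- The maximal lower Riemann–Stieltjes sum of `f` w.r.t. `g` over `n`-point partitions of `[a,b]`. -/
noncomputable def LSopt (a b : ℝ) (f g : ℝ → ℝ) (n : ℕ) : ℝ :=
  sSup {S : ℝ | ∃ t : ℕ → ℝ, t 0 = a ∧ t n = b ∧ (∀ i < n, t i < t (i + 1)) ∧
    S = ∑ i ∈ Finset.range n,
      sInf (f '' Set.Icc (t i) (t (i + 1))) * (g (t (i + 1)) - g (t i))}

open Set Filter Topology intervalIntegral

structure IsPartition (a b : ℝ) (n : ℕ) (t : ℕ → ℝ) : Prop where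
  zero : t 0 = a
  last : t n = b
  lt_succ : ∀ i < n, t i < t (i + 1)

noncomputable def lowerSum (f g : ℝ → ℝ) (n : ℕ) (t : ℕ → ℝ) : ℝ :=
  ∑ i ∈ Finset.range n, sInf (f '' Icc (t i) (t (i + 1))) * (g (t (i + 1)) - g (t i))

noncomputable def lowerGap (f g g' : ℝ → ℝ) (u v : ℝ) : ℝ :=
  (∫ t in u..v, f t * g' t) - sInf (f '' Icc u v) * (g v - g u)

namespace IsPartition

variable {a b : ℝ} {n : ℕ} {t : ℕ → ℝ}

lemma strictMonoOn (ht : IsPartition a b n t) : StrictMonoOn t (Iic n) :=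
  strictMonoOn_Iic_of_lt_succ fun m hm => by simpa using ht.lt_succ m hm

lemma Icc_subset (ht : IsPartition a b n t) {i : ℕ} (hi : i < n) :
    Icc (t i) (t (i + 1)) ⊆ Icc a b := by
  rw [← ht.zero, ← ht.last]
  refine Icc_subset_Icc ?_ ?_
  · exact ht.strictMonoOn.monotoneOn (by simp) (by simp; omega) (Nat.zero_le i)
  · exact ht.strictMonoOn.monotoneOn (by simp; omega) (by simp) hi

lemma integral_sub_lowerSum (ht : IsPartition a b n t) {f g g' : ℝ → ℝ}
    (hfg' : ContinuousOn (fun x => f x * g' x) (Icc a b)) :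
    (∫ x in a..b, f x * g' x) - lowerSum f g n t =
      ∑ i ∈ Finset.range n, lowerGap f g g' (t i) (t (i + 1)) := by
  have hint : ∀ i < n,
      IntervalIntegrable (fun x => f x * g' x) MeasureTheory.volume (t i) (t (i + 1)) :=
    fun i hi => (hfg'.mono (ht.Icc_subset hi)).intervalIntegrable_of_Icc (ht.lt_succ i hi).le
  simp only [lowerGap, Finset.sum_sub_distrib]
  rw [sum_integral_adjacent_intervals hint, ht.zero, ht.last, lowerSum]

end IsPartition

lemma mul_sub_le_integral_of_le {φ : ℝ → ℝ} {u v c : ℝ} (huv : u ≤ v)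
    (hφ : IntervalIntegrable φ MeasureTheory.volume u v) (hc : ∀ x ∈ Icc u v, c ≤ φ x) :
    c * (v - u) ≤ ∫ x in u..v, φ x := by
  calc c * (v - u) = ∫ _ in u..v, c := by rw [integral_const, smul_eq_mul, mul_comm]
    _ ≤ ∫ x in u..v, φ x := integral_mono_on huv intervalIntegrable_const hφ hc

lemma integral_abs_sub_le {u v ξ : ℝ} (hξ : ξ ∈ Icc u v) :
    ∫ t in u..v, |t - ξ| ≤ (v - u) ^ 2 / 2 := by
  have hint : ∀ p q : ℝ, IntervalIntegrable (fun t => |t - ξ|) MeasureTheory.volume p q :=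
    fun p q => (continuous_abs.comp (continuous_sub_right ξ)).intervalIntegrable p q
  have hleft : ∫ t in u..ξ, |t - ξ| = (ξ - u) ^ 2 / 2 := by
    rw [integral_congr (g := fun t => ξ - t) fun t ht => by
      rw [uIcc_of_le hξ.1] at ht
      simp only [abs_of_nonpos (sub_nonpos.2 ht.2), neg_sub]]
    simp only [integral_sub intervalIntegrable_const intervalIntegrable_id, integral_const,
      integral_id, smul_eq_mul]
    ring
  have hright : ∫ t in ξ..v, |t - ξ| = (v - ξ) ^ 2 / 2 := by
    rw [integral_congr (g := fun t => t - ξ) fun t ht => by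
      rw [uIcc_of_le hξ.2] at ht
      simp only [abs_of_nonneg (sub_nonneg.2 ht.1)]]
    simp only [integral_sub intervalIntegrable_id intervalIntegrable_const, integral_const,
      integral_id, smul_eq_mul]
    ring
  rw [← integral_add_adjacent_intervals (hint u ξ) (hint ξ v), hleft, hright]
  nlinarith [hξ.1, hξ.2]

section lowerGap

variable {f g f' g' : ℝ → ℝ} {u v : ℝ}

lemma exists_lowerGap_eq (huv : u ≤ v) (hf : ContinuousOn f (Icc u v))
    (hg : ∀ t ∈ Icc u v, HasDerivWithinAt g (g' t) (Icc u v) t)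
    (hg' : ContinuousOn g' (Icc u v)) :
    ∃ ξ ∈ Icc u v, (∀ t ∈ Icc u v, f ξ ≤ f t) ∧
      lowerGap f g g' u v = ∫ t in u..v, (f t - f ξ) * g' t := by
  obtain ⟨ξ, hξ, hmin⟩ := isCompact_Icc.exists_isMinOn (nonempty_Icc.2 huv) hf
  rw [isMinOn_iff] at hmin
  refine ⟨ξ, hξ, hmin, ?_⟩
  have hinf : sInf (f '' Icc u v) = f ξ :=
    IsLeast.csInf_eq ⟨mem_image_of_mem f hξ, forall_mem_image.2 hmin⟩
  have hFTC : ∫ t in u..v, g' t = g v - g u :=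
    integral_eq_sub_of_hasDerivAt_of_le huv (fun t ht => (hg t ht).continuousWithinAt)
      (fun t ht => (hg t (Ioo_subset_Icc_self ht)).hasDerivAt (Icc_mem_nhds ht.1 ht.2))
      (hg'.intervalIntegrable_of_Icc huv)
  have hfg' : IntervalIntegrable (fun t => f t * g' t) MeasureTheory.volume u v :=
    (hf.mul hg').intervalIntegrable_of_Icc huv
  rw [lowerGap, hinf, ← hFTC, ← integral_const_mul,
    ← integral_sub hfg' ((hg'.intervalIntegrable_of_Icc huv).const_mul _)]
  simp only [sub_mul]

lemma lowerGap_nonneg (huv : u ≤ v) (hf : ContinuousOn f (Icc u v))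
    (hg : ∀ t ∈ Icc u v, HasDerivWithinAt g (g' t) (Icc u v) t)
    (hg' : ContinuousOn g' (Icc u v)) (hg'0 : ∀ t ∈ Icc u v, 0 ≤ g' t) :
    0 ≤ lowerGap f g g' u v := by
  obtain ⟨ξ, -, hmin, hgap⟩ := exists_lowerGap_eq huv hf hg hg'
  rw [hgap]
  exact integral_nonneg huv
    fun t ht => mul_nonneg (sub_nonneg.2 (hmin t ht)) (hg'0 t ht)

lemma lowerGap_le_of_abs_deriv_le (huv : u ≤ v)
    (hf : ∀ t ∈ Icc u v, HasDerivWithinAt f (f' t) (Icc u v) t)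
    (hg : ∀ t ∈ Icc u v, HasDerivWithinAt g (g' t) (Icc u v) t)
    (hg' : ContinuousOn g' (Icc u v)) (hg'0 : ∀ t ∈ Icc u v, 0 ≤ g' t) {M G : ℝ}
    (hM : ∀ t ∈ Icc u v, |f' t| ≤ M) (hG : ∀ t ∈ Icc u v, g' t ≤ G) :
    lowerGap f g g' u v ≤ 1 / 2 * (M * G) * (v - u) ^ 2 := by
  have hfc : ContinuousOn f (Icc u v) := fun t ht => (hf t ht).continuousWithinAt
  obtain ⟨ξ, hξ, -, hgap⟩ := exists_lowerGap_eq huv hfc hg hg'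
  have hM0 : 0 ≤ M := (abs_nonneg _).trans (hM ξ hξ)
  have hG0 : 0 ≤ G := (hg'0 ξ hξ).trans (hG ξ hξ)
  have hpt : ∀ t ∈ Icc u v, (f t - f ξ) * g' t ≤ M * G * |t - ξ| := by
    intro t ht
    have hlip : |f t - f ξ| ≤ M * |t - ξ| := by
      simpa only [Real.norm_eq_abs] using Convex.norm_image_sub_le_of_norm_hasDerivWithin_le hf
        (fun x hx => by simpa only [Real.norm_eq_abs] using hM x hx) (convex_Icc u v) hξ ht
    calc (f t - f ξ) * g' t ≤ M * |t - ξ| * G :=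
          mul_le_mul ((le_abs_self _).trans hlip) (hG t ht) (hg'0 t ht)
            (mul_nonneg hM0 (abs_nonneg _))
      _ = M * G * |t - ξ| := by ring
  calc lowerGap f g g' u v = ∫ t in u..v, (f t - f ξ) * g' t := hgap
    _ ≤ ∫ t in u..v, M * G * |t - ξ| :=
        integral_mono_on huv (((hfc.sub continuousOn_const).mul hg').intervalIntegrable_of_Icc huv)
          ((continuous_const.mul (continuous_abs.comp (continuous_sub_right ξ))).intervalIntegrable
            u v) hpt
    _ = M * G * ∫ t in u..v, |t - ξ| := integral_const_mul _ _
    _ ≤ M * G * ((v - u) ^ 2 / 2) :=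
        mul_le_mul_of_nonneg_left (integral_abs_sub_le hξ) (mul_nonneg hM0 hG0)
    _ = 1 / 2 * (M * G) * (v - u) ^ 2 := by ring

lemma lowerGap_le_sq_integral (huv : u ≤ v)
    (hf : ∀ t ∈ Icc u v, HasDerivWithinAt f (f' t) (Icc u v) t) (hf' : ContinuousOn f' (Icc u v))
    (hg : ∀ t ∈ Icc u v, HasDerivWithinAt g (g' t) (Icc u v) t)
    (hg' : ContinuousOn g' (Icc u v)) (hg'0 : ∀ t ∈ Icc u v, 0 ≤ g' t)
    {φ : ℝ → ℝ} (hφ : ContinuousOn φ (Icc u v))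
    (hloc : ∀ s ∈ Icc u v, ∀ s' ∈ Icc u v, ∀ p ∈ Icc u v, √(|f' s| * g' s') ≤ φ p) :
    lowerGap f g g' u v ≤ 1 / 2 * (∫ t in u..v, φ t) ^ 2 := by
  obtain ⟨s, hs, hsmax⟩ := isCompact_Icc.exists_isMaxOn (nonempty_Icc.2 huv) hf'.abs
  obtain ⟨s', hs', hs'max⟩ := isCompact_Icc.exists_isMaxOn (nonempty_Icc.2 huv) hg'
  have hMG : 0 ≤ |f' s| * g' s' := mul_nonneg (abs_nonneg _) (hg'0 s' hs')
  have hmass : √(|f' s| * g' s') * (v - u) ≤ ∫ t in u..v, φ t :=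
    mul_sub_le_integral_of_le huv (hφ.intervalIntegrable_of_Icc huv) (hloc s hs s' hs')
  calc lowerGap f g g' u v ≤ 1 / 2 * (|f' s| * g' s') * (v - u) ^ 2 :=
        lowerGap_le_of_abs_deriv_le huv hf hg hg' hg'0 (isMaxOn_iff.1 hsmax) (isMaxOn_iff.1 hs'max)
    _ = 1 / 2 * (√(|f' s| * g' s') * (v - u)) ^ 2 := by rw [mul_pow, Real.sq_sqrt hMG]; ring
    _ ≤ 1 / 2 * (∫ t in u..v, φ t) ^ 2 := by gcongr

end lowerGap

lemma exists_forall_le_add_of_continuousOn {α : Type*} [PseudoMetricSpace α] {K : Set α}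
    (hK : IsCompact K) {Φ : α × α → ℝ} (hΦ : ContinuousOn Φ (K ×ˢ K)) {η : ℝ} (hη : 0 < η) :
    ∃ δ > 0, ∀ s ∈ K, ∀ s' ∈ K, ∀ p ∈ K, dist s p < δ → dist s' p < δ →
      Φ (s, s') ≤ Φ (p, p) + η := by
  obtain ⟨δ, hδ, hclose⟩ :=
    Metric.uniformContinuousOn_iff.1 ((hK.prod hK).uniformContinuousOn_of_continuous hΦ) η hη
  refine ⟨δ, hδ, fun s hs s' hs' p hp hsp hs'p => ?_⟩
  have h := hclose (s, s') ⟨hs, hs'⟩ (p, p) ⟨hp, hp⟩ (by rw [Prod.dist_eq]; exact max_lt hsp hs'p)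
  rw [Real.dist_eq] at h
  linarith [le_abs_self (Φ (s, s') - Φ (p, p))]

/-- The points are preimages of the multiples of `(∫ φ) / n` under the strictly increasing
primitive of `φ`. -/
lemma exists_isPartition_integral_eq {a b : ℝ} (hab : a < b) {φ : ℝ → ℝ}
    (hφ : ContinuousOn φ (Icc a b)) (hφ0 : ∀ x ∈ Icc a b, 0 < φ x) {n : ℕ} (hn : 0 < n) :
    ∃ t, IsPartition a b n t ∧ ∀ i < n, ∫ x in t i..t (i + 1), φ x = (∫ x in a..b, φ x) / n := by
  have ha : a ∈ Icc a b := left_mem_Icc.2 hab.le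
  have hb : b ∈ Icc a b := right_mem_Icc.2 hab.le
  set H : ℝ → ℝ := fun y => ∫ x in a..y, φ x
  have hint : ∀ y ∈ Icc a b, ∀ z ∈ Icc a b, IntervalIntegrable φ MeasureTheory.volume y z :=
    fun y hy z hz => (hφ.mono (uIcc_subset_Icc hy hz)).intervalIntegrable
  have hdiff : ∀ y ∈ Icc a b, ∀ z ∈ Icc a b, H z - H y = ∫ x in y..z, φ x := fun y hy z hz =>
    integral_interval_sub_left (hint a ha z hz) (hint a ha y hy)
  have hmono : StrictMonoOn H (Icc a b) := fun y hy z hz hyz => by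
    rw [← sub_pos, hdiff y hy z hz]
    exact intervalIntegral_pos_of_pos_on (hint y hy z hz)
      (fun x hx => hφ0 x ⟨hy.1.trans hx.1.le, hx.2.le.trans hz.2⟩) hyz
  have hcont : ContinuousOn H (Icc a b) := by
    simpa only [uIcc_of_le hab.le] using
      continuousOn_primitive_interval' (hint a ha b hb) left_mem_uIcc
  have hHa : H a = 0 := integral_same
  have hHb : 0 < H b := by simpa [hHa] using hmono ha hb hab
  have hval : ∀ i : ℕ, ((min i n : ℕ) : ℝ) * (H b / n) ∈ Icc (H a) (H b) := fun i => by
    rw [hHa]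
    refine ⟨by positivity, ?_⟩
    calc ((min i n : ℕ) : ℝ) * (H b / n) ≤ n * (H b / n) := by gcongr; exact min_le_right i n
      _ = H b := by field_simp
  choose t ht hHt using fun i => intermediate_value_Icc hab.le hcont (hval i)
  have hHt' : ∀ i ≤ n, H (t i) = i * (H b / n) := fun i hi => by rw [hHt, min_eq_left hi]
  refine ⟨t, ⟨?_, ?_, fun i hi => ?_⟩, fun i hi => ?_⟩
  · exact hmono.injOn (ht 0) ha (by rw [hHt' 0 (Nat.zero_le n), hHa]; simp)
  · exact hmono.injOn (ht n) hb (by rw [hHt' n le_rfl]; field_simp)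
  · rw [← hmono.lt_iff_lt (ht i) (ht (i + 1)), hHt' i hi.le, hHt' (i + 1) hi]
    gcongr
    linarith
  · rw [← hdiff (t i) (ht i) (t (i + 1)) (ht (i + 1)), hHt' i hi.le, hHt' (i + 1) hi]
    push_cast
    ring

section LSopt

variable {a b : ℝ} {f g g' : ℝ → ℝ} {n : ℕ}

lemma lowerSum_le_integral {t : ℕ → ℝ} (ht : IsPartition a b n t) (hf : ContinuousOn f (Icc a b))
    (hg : ∀ x ∈ Icc a b, HasDerivWithinAt g (g' x) (Icc a b) x) (hg' : ContinuousOn g' (Icc a b))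
    (hg'0 : ∀ x ∈ Icc a b, 0 ≤ g' x) :
    lowerSum f g n t ≤ ∫ x in a..b, f x * g' x := by
  rw [← sub_nonneg, ht.integral_sub_lowerSum (hf.mul hg')]
  refine Finset.sum_nonneg fun i hi => ?_
  have hsub := ht.Icc_subset (Finset.mem_range.1 hi)
  exact lowerGap_nonneg (ht.lt_succ i (Finset.mem_range.1 hi)).le (hf.mono hsub)
    (fun x hx => (hg x (hsub hx)).mono hsub) (hg'.mono hsub) fun x hx => hg'0 x (hsub hx)

lemma lowerSum_le_LSopt {t : ℕ → ℝ} (ht : IsPartition a b n t) (hf : ContinuousOn f (Icc a b))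
    (hg : ∀ x ∈ Icc a b, HasDerivWithinAt g (g' x) (Icc a b) x) (hg' : ContinuousOn g' (Icc a b))
    (hg'0 : ∀ x ∈ Icc a b, 0 ≤ g' x) :
    lowerSum f g n t ≤ LSopt a b f g n := by
  refine le_csSup ⟨∫ x in a..b, f x * g' x, ?_⟩ ⟨t, ht.zero, ht.last, ht.lt_succ, rfl⟩
  rintro _ ⟨s, hs0, hsn, hs, rfl⟩
  exact lowerSum_le_integral ⟨hs0, hsn, hs⟩ hf hg hg' hg'0

lemma LSopt_le_integral (hab : a < b) (hn : 0 < n) (hf : ContinuousOn f (Icc a b))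
    (hg : ∀ x ∈ Icc a b, HasDerivWithinAt g (g' x) (Icc a b) x) (hg' : ContinuousOn g' (Icc a b))
    (hg'0 : ∀ x ∈ Icc a b, 0 ≤ g' x) :
    LSopt a b f g n ≤ ∫ x in a..b, f x * g' x := by
  obtain ⟨t, ht, -⟩ :=
    exists_isPartition_integral_eq hab continuousOn_const (fun _ _ => one_pos) hn
  refine csSup_le ⟨_, t, ht.zero, ht.last, ht.lt_succ, rfl⟩ ?_
  rintro _ ⟨s, hs0, hsn, hs, rfl⟩
  exact lowerSum_le_integral ⟨hs0, hsn, hs⟩ hf hg hg' hg'0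

lemma IsPartition.lowerGap_le_sq_integral_of_sub_lt {t : ℕ → ℝ} (ht : IsPartition a b n t) {i : ℕ}
    (hi : i < n) {f' : ℝ → ℝ} (hf : ∀ x ∈ Icc a b, HasDerivWithinAt f (f' x) (Icc a b) x)
    (hf' : ContinuousOn f' (Icc a b)) (hg : ∀ x ∈ Icc a b, HasDerivWithinAt g (g' x) (Icc a b) x)
    (hg' : ContinuousOn g' (Icc a b)) (hg'0 : ∀ x ∈ Icc a b, 0 ≤ g' x) {φ : ℝ → ℝ}
    (hφ : ContinuousOn φ (Icc a b)) {δ : ℝ} (hloc : ∀ s ∈ Icc a b, ∀ s' ∈ Icc a b, ∀ p ∈ Icc a b,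
      dist s p < δ → dist s' p < δ → √(|f' s| * g' s') ≤ φ p)
    (hlen : t (i + 1) - t i < δ) :
    lowerGap f g g' (t i) (t (i + 1)) ≤ 1 / 2 * (∫ x in t i..t (i + 1), φ x) ^ 2 := by
  have hsub := ht.Icc_subset hi
  exact lowerGap_le_sq_integral (ht.lt_succ i hi).le (fun x hx => (hf x (hsub hx)).mono hsub)
    (hf'.mono hsub) (fun x hx => (hg x (hsub hx)).mono hsub) (hg'.mono hsub)
    (fun x hx => hg'0 x (hsub hx)) (hφ.mono hsub) fun s hs s' hs' p hp =>
      hloc s (hsub hs) s' (hsub hs') p (hsub hp) ((Real.dist_le_of_mem_Icc hs hp).trans_lt hlen)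
        ((Real.dist_le_of_mem_Icc hs' hp).trans_lt hlen)

lemma eventually_mul_integral_sub_LSopt_le (hab : a < b) {f' : ℝ → ℝ}
    (hf : ∀ x ∈ Icc a b, HasDerivWithinAt f (f' x) (Icc a b) x) (hf' : ContinuousOn f' (Icc a b))
    (hg : ∀ x ∈ Icc a b, HasDerivWithinAt g (g' x) (Icc a b) x) (hg' : ContinuousOn g' (Icc a b))
    (hg'0 : ∀ x ∈ Icc a b, 0 ≤ g' x) {η : ℝ} (hη : 0 < η) :
    ∀ᶠ n : ℕ in atTop, n * ((∫ x in a..b, f x * g' x) - LSopt a b f g n) ≤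
      1 / 2 * ((∫ x in a..b, √(|f' x| * g' x)) + η * (b - a)) ^ 2 := by
  have hfc : ContinuousOn f (Icc a b) := fun x hx => (hf x hx).continuousWithinAt
  set φ : ℝ → ℝ := fun x => √(|f' x| * g' x) + η
  have hsqrt : ContinuousOn (fun x => √(|f' x| * g' x)) (Icc a b) := (hf'.abs.mul hg').sqrt
  have hφ : ContinuousOn φ (Icc a b) := hsqrt.add continuousOn_const
  have hmass : ∫ x in a..b, φ x = (∫ x in a..b, √(|f' x| * g' x)) + η * (b - a) := by
    rw [integral_add (hsqrt.intervalIntegrable_of_Icc hab.le) intervalIntegrable_const,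
      integral_const, smul_eq_mul, mul_comm]
  obtain ⟨δ, hδ, hloc⟩ := exists_forall_le_add_of_continuousOn isCompact_Icc
    (Φ := fun p => √(|f' p.1| * g' p.2))
    (((hf'.comp continuousOn_fst mapsTo_fst_prod).abs.mul
      (hg'.comp continuousOn_snd mapsTo_snd_prod)).sqrt) hη
  have hshort : ∀ᶠ n : ℕ in atTop, (∫ x in a..b, φ x) / n / η < δ := by
    have h := (tendsto_const_div_atTop_nhds_zero_nat (∫ x in a..b, φ x)).div_const η
    rw [zero_div] at h
    exact h.eventually (gt_mem_nhds hδ)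
  filter_upwards [eventually_gt_atTop 0, hshort] with n hn hnδ
  obtain ⟨t, ht, htmass⟩ := exists_isPartition_integral_eq hab hφ (fun x _ => by positivity) hn
  have hgap : ∀ i ∈ Finset.range n,
      lowerGap f g g' (t i) (t (i + 1)) ≤ 1 / 2 * ((∫ x in a..b, φ x) / n) ^ 2 := by
    intro i hi
    rw [Finset.mem_range] at hi
    have hsub := ht.Icc_subset hi
    have hlen : t (i + 1) - t i < δ := by
      have hle := mul_sub_le_integral_of_le (ht.lt_succ i hi).le
        ((hφ.mono hsub).intervalIntegrable_of_Icc (ht.lt_succ i hi).le)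
        fun x _ => le_add_of_nonneg_left (Real.sqrt_nonneg (|f' x| * g' x))
      rw [htmass i hi] at hle
      exact ((le_div_iff₀' hη).2 hle).trans_lt hnδ
    rw [← htmass i hi]
    exact ht.lowerGap_le_sq_integral_of_sub_lt hi hf hf' hg hg' hg'0 hφ hloc hlen
  calc (n : ℝ) * ((∫ x in a..b, f x * g' x) - LSopt a b f g n)
      ≤ n * ((∫ x in a..b, f x * g' x) - lowerSum f g n t) := by
        gcongr
        exact lowerSum_le_LSopt ht hfc hg hg' hg'0
    _ ≤ n * (n • (1 / 2 * ((∫ x in a..b, φ x) / n) ^ 2)) := by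
        rw [ht.integral_sub_lowerSum (hfc.mul hg')]
        gcongr
        simpa using Finset.sum_le_card_nsmul _ _ _ hgap
    _ = 1 / 2 * ((∫ x in a..b, √(|f' x| * g' x)) + η * (b - a)) ^ 2 := by
        rw [← hmass, nsmul_eq_mul]
        field_simp

end LSopt

theorem limsup_rate_upper_general
    (a b : ℝ) (hab : a < b) (f g f' g' : ℝ → ℝ)
    (hf : ∀ t ∈ Set.Icc a b, HasDerivWithinAt f (f' t) (Set.Icc a b) t)
    (hf' : ContinuousOn f' (Set.Icc a b))
    (hg : ∀ t ∈ Set.Icc a b, HasDerivWithinAt g (g' t) (Set.Icc a b) t)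
    (hg' : ContinuousOn g' (Set.Icc a b))
    (hgpos : ∀ t ∈ Set.Icc a b, 0 < g' t) :
    Filter.limsup
      (fun n : ℕ => (n : ℝ) * ((∫ t in a..b, f t * g' t) - LSopt a b f g n))
      Filter.atTop ≤
      (1 / 2) * (∫ t in a..b, Real.sqrt (|f' t| * g' t)) ^ 2 := by
  have hfc : ContinuousOn f (Icc a b) := fun t ht => (hf t ht).continuousWithinAt
  have hg'0 : ∀ t ∈ Icc a b, 0 ≤ g' t := fun t ht => (hgpos t ht).le
  set A := ∫ t in a..b, √(|f' t| * g' t)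
  have hcobdd : IsCoboundedUnder (· ≤ ·) atTop
      fun n : ℕ => (n : ℝ) * ((∫ t in a..b, f t * g' t) - LSopt a b f g n) :=
    isCoboundedUnder_le_of_eventually_le atTop <| (eventually_gt_atTop 0).mono fun n hn =>
      mul_nonneg n.cast_nonneg (sub_nonneg.2 (LSopt_le_integral hab hn hfc hg hg' hg'0))
  have hlim : Tendsto (fun η : ℝ => 1 / 2 * (A + η * (b - a)) ^ 2) (𝓝[>] 0)
      (𝓝 (1 / 2 * A ^ 2)) := by
    have hcont : ContinuousAt (fun η : ℝ => 1 / 2 * (A + η * (b - a)) ^ 2) 0 := by fun_prop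
    simpa using hcont.tendsto.mono_left nhdsWithin_le_nhds
  exact ge_of_tendsto hlim (eventually_nhdsWithin_of_forall fun η hη =>
    limsup_le_of_le hcobdd (eventually_mul_integral_sub_LSopt_le hab hf hf' hg hg' hg'0 hη))

/-- Upper estimate for the rate of convergence of the optimal lower Riemann–Stieltjes sums. -/
theorem limsup_rate_upper
    (a b : ℝ) (hab : a < b) (f g f' g' : ℝ → ℝ)
    (hf : ∀ t ∈ Set.Icc a b, HasDerivWithinAt f (f' t) (Set.Icc a b) t)
    (hf' : ContinuousOn f' (Set.Icc a b))
    (hzeros : {t ∈ Set.Icc a b | f' t = 0}.Finite)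
    (hg : ∀ t ∈ Set.Icc a b, HasDerivWithinAt g (g' t) (Set.Icc a b) t)
    (hg' : ContinuousOn g' (Set.Icc a b))
    (hgpos : ∀ t ∈ Set.Icc a b, 0 < g' t) :
    Filter.limsup
      (fun n : ℕ => (n : ℝ) * ((∫ t in a..b, f t * g' t) - LSopt a b f g n))
      Filter.atTop ≤
      (1 / 2) * (∫ t in a..b, Real.sqrt (|f' t| * g' t)) ^ 2 :=
  limsup_rate_upper_general a b hab f g f' g' hf hf' hg hg' hgpos
end

section
/- Let f ∈ C¹[a,b] and g ∈ C¹[a,b] with g' > 0, and suppose f' > 0 on a subinterval [p,q]. Then there exist c, d ∈ (p,q) such that ∫ₚ^q f(t) dg(t) − (g(q) − g(p)) f(p) = g'(c) · f'(d) · (q − p)²/2. -/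
/-!
Write `E x = ∫ₚˣ f dg - (g x - g p) f p`, so that `E p = 0` and `E' x = (f x - f p) g'(x)`.
Cauchy's mean value theorem, comparing `E` with `(x - p)² / 2`, gives `c` with
`E q (c - p) = (f c - f p) g'(c) (q - p)² / 2`, and Lagrange's mean value theorem on `[p, c]`
turns `f c - f p` into `f'(d) (c - p)`.
-/

open Set MeasureTheory

theorem hasDerivAt_integral_of_continuousOn_Icc {E : Type*} [NormedAddCommGroup E]
    [NormedSpace ℝ E] [CompleteSpace E] {φ : ℝ → E} {p q x : ℝ}
    (hφ : ContinuousOn φ (Icc p q)) (hx : x ∈ Ioo p q) :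
    HasDerivAt (fun u => ∫ t in p..u, φ t) (φ x) x := by
  refine intervalIntegral.integral_hasDerivAt_right ?_
    ((hφ.mono Ioo_subset_Icc_self).stronglyMeasurableAtFilter isOpen_Ioo x hx)
    (hφ.continuousAt (Icc_mem_nhds hx.1 hx.2))
  refine (hφ.mono ?_).intervalIntegrable
  rw [uIcc_of_le hx.1.le]
  exact Icc_subset_Icc_right hx.2.le

theorem continuousOn_primitive_Icc {E : Type*} [NormedAddCommGroup E] [NormedSpace ℝ E]
    {φ : ℝ → E} {p q : ℝ} (hpq : p ≤ q) (hφ : ContinuousOn φ (Icc p q)) :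
    ContinuousOn (fun u => ∫ t in p..u, φ t) (Icc p q) := by
  have := intervalIntegral.continuousOn_primitive_interval (μ := volume)
    (hφ.integrableOn_compact isCompact_Icc |>.mono_set (uIcc_of_le hpq).subset)
  rwa [uIcc_of_le hpq] at this

/-- Cauchy's mean value theorem against `x ↦ (x - p) ^ 2 / 2`. -/
theorem exists_ratio_hasDerivAt_eq_ratio_slope_sq {E E' : ℝ → ℝ} {p q : ℝ} (hpq : p < q)
    (hE : ContinuousOn E (Icc p q)) (hE' : ∀ x ∈ Ioo p q, HasDerivAt E (E' x) x) :
    ∃ c ∈ Ioo p q, (E q - E p) * (c - p) = E' c * (q - p) ^ 2 / 2 := by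
  have hG : ∀ x ∈ Ioo p q, HasDerivAt (fun x => (x - p) ^ 2 / 2) (x - p) x := fun x _ => by
    simpa using (((hasDerivAt_id x).sub_const p).pow 2).div_const 2
  obtain ⟨c, hc, hcE⟩ :=
    exists_ratio_hasDerivAt_eq_ratio_slope E E' hpq hE hE' _ _ (by fun_prop) hG
  exact ⟨c, hc, by linear_combination -hcE⟩

/-- Error of the left-endpoint Riemann–Stieltjes approximation `(g x - g p) f p` of `∫ₚˣ f dg`,
with `dg = g' dt`. -/
noncomputable def localError (f g g' : ℝ → ℝ) (p x : ℝ) : ℝ :=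
  (∫ t in p..x, f t * g' t) - (g x - g p) * f p

section localError

variable {f g g' : ℝ → ℝ} {p q : ℝ}

@[simp]
theorem localError_self : localError f g g' p p = 0 := by
  simp [localError]

theorem continuousOn_localError (hpq : p ≤ q) (hf : ContinuousOn f (Icc p q))
    (hg : ContinuousOn g (Icc p q)) (hg' : ContinuousOn g' (Icc p q)) :
    ContinuousOn (localError f g g' p) (Icc p q) :=
  (continuousOn_primitive_Icc hpq (hf.mul hg')).sub
    ((hg.sub continuousOn_const).mul continuousOn_const)

theorem hasDerivAt_localError {x : ℝ} (hf : ContinuousOn f (Icc p q))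
    (hg' : ContinuousOn g' (Icc p q)) (hx : x ∈ Ioo p q) (hgx : HasDerivAt g (g' x) x) :
    HasDerivAt (localError f g g' p) ((f x - f p) * g' x) x := by
  refine ((hasDerivAt_integral_of_continuousOn_Icc (hf.mul hg') hx).sub
    ((hgx.sub_const (g p)).mul_const (f p))).congr_deriv ?_
  simp only [Pi.mul_apply]
  ring

end localError

theorem local_error_mean_value_general
    (a b : ℝ) (f g f' g' : ℝ → ℝ)
    (hf : ∀ t ∈ Set.Icc a b, HasDerivWithinAt f (f' t) (Set.Icc a b) t)
    (hg : ∀ t ∈ Set.Icc a b, HasDerivWithinAt g (g' t) (Set.Icc a b) t)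
    (hg' : ContinuousOn g' (Set.Icc a b))
    (p q : ℝ) (hap : a ≤ p) (hpq : p < q) (hqb : q ≤ b) :
    ∃ c ∈ Set.Ioo p q, ∃ d ∈ Set.Ioo p q,
      (∫ t in p..q, f t * g' t) - (g q - g p) * f p =
        g' c * f' d * (q - p) ^ 2 / 2 := by
  have hsub : Icc p q ⊆ Icc a b := Icc_subset_Icc hap hqb
  have hnhds : ∀ x ∈ Ioo p q, Icc a b ∈ nhds x := fun x hx =>
    Icc_mem_nhds (hap.trans_lt hx.1) (hx.2.trans_le hqb)
  have hfc : ContinuousOn f (Icc p q) := fun t ht => (hf t (hsub ht)).continuousWithinAt.mono hsub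
  have hgc : ContinuousOn g (Icc p q) := fun t ht => (hg t (hsub ht)).continuousWithinAt.mono hsub
  have hfd : ∀ x ∈ Ioo p q, HasDerivAt f (f' x) x := fun x hx =>
    (hf x (hsub (Ioo_subset_Icc_self hx))).hasDerivAt (hnhds x hx)
  have hgd : ∀ x ∈ Ioo p q, HasDerivAt g (g' x) x := fun x hx =>
    (hg x (hsub (Ioo_subset_Icc_self hx))).hasDerivAt (hnhds x hx)
  obtain ⟨c, hc, hEc⟩ := exists_ratio_hasDerivAt_eq_ratio_slope_sq hpq
    (continuousOn_localError hpq.le hfc hgc (hg'.mono hsub))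
    fun x hx => hasDerivAt_localError hfc (hg'.mono hsub) hx (hgd x hx)
  obtain ⟨d, hd, hfdc⟩ := exists_hasDerivAt_eq_slope f f' hc.1
    (hfc.mono (Icc_subset_Icc_right hc.2.le)) fun x hx => hfd x ⟨hx.1, hx.2.trans hc.2⟩
  refine ⟨c, hc, d, ⟨hd.1, hd.2.trans hc.2⟩, ?_⟩
  have hcp : c - p ≠ 0 := sub_ne_zero.2 hc.1.ne'
  rw [eq_div_iff hcp] at hfdc
  rw [localError_self, sub_zero, ← hfdc] at hEc
  refine mul_right_cancel₀ hcp ?_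
  rw [localError] at hEc
  linear_combination hEc

/-- Mean value form of the local lower Riemann–Stieltjes error when `f' > 0` on `[p,q]`. -/
theorem local_error_mean_value
    (a b : ℝ) (hab : a < b) (f g f' g' : ℝ → ℝ)
    (hf : ∀ t ∈ Set.Icc a b, HasDerivWithinAt f (f' t) (Set.Icc a b) t)
    (hf' : ContinuousOn f' (Set.Icc a b))
    (hg : ∀ t ∈ Set.Icc a b, HasDerivWithinAt g (g' t) (Set.Icc a b) t)
    (hg' : ContinuousOn g' (Set.Icc a b))
    (hgpos : ∀ t ∈ Set.Icc a b, 0 < g' t)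
    (p q : ℝ) (hap : a ≤ p) (hpq : p < q) (hqb : q ≤ b)
    (hfpos : ∀ t ∈ Set.Icc p q, 0 < f' t) :
    ∃ c ∈ Set.Ioo p q, ∃ d ∈ Set.Ioo p q,
      (∫ t in p..q, f t * g' t) - (g q - g p) * f p =
        g' c * f' d * (q - p) ^ 2 / 2 :=
  local_error_mean_value_general a b f g f' g' hf hg hg' p q hap hpq hqb
end
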